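/- arXiv:1807.01549 — 8 statements merged into one kernel-verified Lean document; each statement's English description precedes it below -/
import Mathlib

section
/- Let X be a topological space and (U_n)_{n∈ℕ} a sequence of nonempty open subsets of X. Then there exists an infinite set M ⊆ ℕ and nonempty open sets V_n ⊆ U_n for n ∈ M such that either the family {V_n : n ∈ M} is pairwise disjoint, or all V_n (n ∈ M) are equal to a single singleton set. -/
open Set Filter Topology Function

/-- A free ultrafilter on ℕ: one containing no singleton. -/
def FreeUF (p : Ultrafilter ℕ) : Prop := ∀ n : ℕ, ({n} : Set ℕ) ∉ p

/-- `l` is the `p`-limit of the sequence `x`. -/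
def PLim {X : Type*} [TopologicalSpace X] (p : Ultrafilter ℕ) (x : ℕ → X) (l : X) : Prop :=
  Filter.Tendsto x (p : Filter ℕ) (nhds l)

/-- A βω-space: the closure of any countably infinite discrete subset with compact closure
is homeomorphic to βℕ. -/
def BetaOmegaSpace (X : Type*) [TopologicalSpace X] : Prop :=
  ∀ M : Set X, M.Countable → M.Infinite → DiscreteTopology M → IsCompact (closure M) →
    Nonempty (closure M ≃ₜ StoneCech ℕ)

/-- Keisler–Rudin (Rudin–Keisler) order on ultrafilters on ℕ. -/
def RKle (p q : Ultrafilter ℕ) : Prop := ∃ f : ℕ → ℕ, Ultrafilter.map f q = p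

/-- A homogeneous space. -/
def Homogeneous (X : Type*) [TopologicalSpace X] : Prop :=
  ∀ x y : X, ∃ h : X ≃ₜ X, h x = y

/-!
If some isolated point `u` lies in infinitely many `U n`, take `V n = {u}`. Otherwise refine
recursively, holding an infinite set of indices `M` and a closed set `F` with every `U m \ F`
(`m ∈ M`) nonempty. Pick `n ∈ M`. The open set `U n \ F` is either an isolated point, lying in
only finitely many `U m`, or contains two points with disjoint open neighbourhoods, whose closures
cannot both contain a nonempty open set. Either way it contains a nonempty open `V` with
`U m \ (F ∪ closure V)` nonempty for infinitely many `m ∈ M`. Keep `V` at index `n` and continue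
with those `m` and `F ∪ closure V`.
-/

section Refinement

variable {X : Type*} [TopologicalSpace X]

theorem Disjoint.eq_empty_of_subset_closure {A V₁ V₂ : Set X} (hd : Disjoint V₁ V₂)
    (hV₂ : IsOpen V₂) (hA : IsOpen A) (h₁ : A ⊆ closure V₁) (h₂ : A ⊆ closure V₂) : A = ∅ := by
  rw [← not_nonempty_iff_eq_empty]
  intro hAne
  obtain ⟨x, hxV₂, hxA⟩ : (V₂ ∩ A).Nonempty :=
    (closure_inter_open_nonempty_iff hA).1 (by rwa [inter_eq_right.2 h₂])
  exact (hd.closure_left hV₂).ne_of_mem (h₁ hxA) hxV₂ rfl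

theorem exists_isOpen_subset_infinite_diff_closure_nonempty [T2Space X] {ι : Type*}
    {W : Set X} (hW : IsOpen W) (hWne : W.Nonempty) {M : Set ι} (hM : M.Infinite)
    {A : ι → Set X} (hA : ∀ i, IsOpen (A i)) (hAne : ∀ i ∈ M, (A i).Nonempty)
    (hiso : ∀ u, IsOpen {u} → {i | u ∈ A i}.Finite) :
    ∃ V ⊆ W, IsOpen V ∧ V.Nonempty ∧ {i ∈ M | (A i \ closure V).Nonempty}.Infinite := by
  rcases hWne.exists_eq_singleton_or_nontrivial with ⟨u, rfl⟩ | ⟨x, hx, y, hy, hxy⟩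
  · refine ⟨{u}, subset_rfl, hW, singleton_nonempty u, (hM.sdiff (hiso u hW)).mono ?_⟩
    rintro i ⟨hiM, hiu⟩
    obtain ⟨z, hz⟩ := hAne i hiM
    refine ⟨hiM, z, hz, ?_⟩
    rw [closure_singleton]
    rintro rfl
    exact hiu hz
  · obtain ⟨O₁, O₂, hO₁, hO₂, hxO, hyO, hd⟩ := t2_separation hxy
    by_contra! hfin
    have h₁ := hfin (O₁ ∩ W) inter_subset_right (hO₁.inter hW) ⟨x, hxO, hx⟩
    have h₂ := hfin (O₂ ∩ W) inter_subset_right (hO₂.inter hW) ⟨y, hyO, hy⟩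
    obtain ⟨i, hiM, hi⟩ := (hM.sdiff (h₁.union h₂)).nonempty
    simp only [mem_union, mem_sep_iff, hiM, true_and, not_or, not_nonempty_iff_eq_empty,
      sdiff_eq_empty] at hi
    exact (hAne i hiM).ne_empty <|
      (hd.mono inter_subset_left inter_subset_left).eq_empty_of_subset_closure
        (hO₂.inter hW) (hA i) hi.1 hi.2

/-- A stage of the recursion: `removed` is the closed set used up by the sets chosen so far. -/
structure Shrinking (U : ℕ → Set X) where
  indices : Set ℕ
  removed : Set X
  infinite_indices : indices.Infinite
  isClosed_removed : IsClosed removed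
  nonempty_diff : ∀ m ∈ indices, (U m \ removed).Nonempty

variable {U : ℕ → Set X}

theorem Shrinking.exists_next [T2Space X] (hU : ∀ n, IsOpen (U n))
    (hiso : ∀ u, IsOpen {u} → {n | u ∈ U n}.Finite) (s : Shrinking U) :
    ∃ n ∈ s.indices, ∃ V : Set X, IsOpen V ∧ V.Nonempty ∧ V ⊆ U n \ s.removed ∧
      ∃ t : Shrinking U, t.indices ⊆ s.indices \ {n} ∧ s.removed ⊆ t.removed ∧ V ⊆ t.removed := by
  obtain ⟨n, hn⟩ := s.infinite_indices.nonempty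
  have hA : ∀ m, IsOpen (U m \ s.removed) := fun m => (hU m).sdiff s.isClosed_removed
  obtain ⟨V, hVsub, hV, hVne, hinf⟩ := exists_isOpen_subset_infinite_diff_closure_nonempty
    (hA n) (s.nonempty_diff n hn) (s.infinite_indices.sdiff (finite_singleton n)) hA
    (fun m hm => s.nonempty_diff m hm.1) (fun u hu => (hiso u hu).subset fun m hm => hm.1)
  refine ⟨n, hn, V, hV, hVne, hVsub,
    ⟨_, s.removed ∪ closure V, hinf, s.isClosed_removed.union isClosed_closure,
      fun m hm => by simpa only [sdiff_sdiff] using hm.2⟩,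
    sep_subset _ _, subset_union_left, subset_closure.trans subset_union_right⟩

theorem exists_injective_pairwise_disjoint_subset [T2Space X] (hU : ∀ n, IsOpen (U n))
    (hne : ∀ n, (U n).Nonempty) (hiso : ∀ u, IsOpen {u} → {n | u ∈ U n}.Finite) :
    ∃ (N : ℕ → ℕ) (W : ℕ → Set X), Injective N ∧ (∀ k, IsOpen (W k)) ∧
      (∀ k, (W k).Nonempty) ∧ (∀ k, W k ⊆ U (N k)) ∧ Pairwise (Disjoint on W) := by
  choose n hn V hV hVne hVsub next hnext_indices hnext_removed hV_removed using
    Shrinking.exists_next hU hiso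
  let s₀ : Shrinking U :=
    ⟨univ, ∅, infinite_univ, isClosed_empty, fun m _ => by simpa only [sdiff_empty] using hne m⟩
  let stage : ℕ → Shrinking U := fun k => Nat.rec s₀ (fun _ => next) k
  have indices_anti : Antitone fun k => (stage k).indices :=
    antitone_nat_of_succ_le fun k => (hnext_indices (stage k)).trans sdiff_subset
  have removed_mono : Monotone fun k => (stage k).removed :=
    monotone_nat_of_le_succ fun k => hnext_removed (stage k)
  refine ⟨fun k => n (stage k), fun k => V (stage k), .of_lt_imp_ne fun k l hkl => ?_,
    fun k => hV _, fun k => hVne _, fun k => (hVsub _).trans sdiff_subset,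
    (pairwise_disjoint_on _).2 fun k l hkl => ?_⟩
  · have hl : n (stage l) ∈ (stage k).indices \ {n (stage k)} :=
      hnext_indices (stage k) (indices_anti (Nat.succ_le_of_lt hkl) (hn (stage l)))
    exact fun h => hl.2 h.symm
  · exact disjoint_sdiff_right.mono
      ((hV_removed (stage k)).trans (removed_mono (Nat.succ_le_of_lt hkl))) (hVsub (stage l))

end Refinement

theorem stmt_1_general {X : Type*} [TopologicalSpace X] [T2Space X]
    (U : ℕ → Set X) (hopen : ∀ n, IsOpen (U n)) (hne : ∀ n, (U n).Nonempty) :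
    ∃ (M : Set ℕ) (V : ℕ → Set X), M.Infinite ∧
      (∀ n ∈ M, IsOpen (V n)) ∧ (∀ n ∈ M, (V n).Nonempty) ∧ (∀ n ∈ M, V n ⊆ U n) ∧
      ((∀ n ∈ M, ∀ m ∈ M, n ≠ m → V n ∩ V m = ∅) ∨
        (∃ u : X, ∀ n ∈ M, V n = {u})) := by
  by_cases hiso : ∀ u, IsOpen {u} → {n | u ∈ U n}.Finite
  · obtain ⟨N, W, hN, hW, hWne, hWU, hdisj⟩ :=
      exists_injective_pairwise_disjoint_subset hopen hne hiso
    have hWN : ∀ k, W (invFun N (N k)) = W k := fun k => by rw [leftInverse_invFun hN k]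
    refine ⟨range N, W ∘ invFun N, infinite_range_of_injective hN, ?_, ?_, ?_, Or.inl ?_⟩
    · rintro _ ⟨k, rfl⟩; simpa only [comp_apply, hWN] using hW k
    · rintro _ ⟨k, rfl⟩; simpa only [comp_apply, hWN] using hWne k
    · rintro _ ⟨k, rfl⟩; simpa only [comp_apply, hWN] using hWU k
    · rintro _ ⟨k, rfl⟩ _ ⟨l, rfl⟩ hkl
      simpa only [comp_apply, hWN] using
        disjoint_iff_inter_eq_empty.1 (hdisj (ne_of_apply_ne N hkl))
  · push Not at hiso
    obtain ⟨u, hu, hinf⟩ := hiso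
    exact ⟨{n | u ∈ U n}, fun _ => {u}, hinf, fun _ _ => hu, fun _ _ => singleton_nonempty u,
      fun _ hn => singleton_subset_iff.2 hn, Or.inr ⟨u, fun _ _ => rfl⟩⟩

/-- Refining a sequence of nonempty open sets to a disjoint family
or to a constant singleton family along an infinite index set. -/
theorem stmt_1 {X : Type*} [TopologicalSpace X] [T2Space X] [CompletelyRegularSpace X]
    (U : ℕ → Set X) (hopen : ∀ n, IsOpen (U n)) (hne : ∀ n, (U n).Nonempty) :
    ∃ (M : Set ℕ) (V : ℕ → Set X), M.Infinite ∧
      (∀ n ∈ M, IsOpen (V n)) ∧ (∀ n ∈ M, (V n).Nonempty) ∧ (∀ n ∈ M, V n ⊆ U n) ∧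
      ((∀ n ∈ M, ∀ m ∈ M, n ≠ m → V n ∩ V m = ∅) ∨
        (∃ u : X, ∀ n ∈ M, V n = {u})) :=
  stmt_1_general U hopen hne
end

section
/- Let X be a topological space and let (U_n)_{n∈ℕ}, (V_n)_{n∈ℕ} be two sequences of pairwise disjoint nonempty open subsets of X. Then either (1) for almost all n, U_n = V_n and U_n is a singleton, or (2) there exists an infinite M ⊆ ℕ and nonempty open sets U'_n ⊆ U_n and V'_n ⊆ V_n for n ∈ M such that (⋃_{n∈M} U'_n) ∩ (⋃_{n∈M} V'_n) = ∅. -/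
/-!
Call `n` separable if `U n` and `V n` contain points `x ≠ y`; otherwise `U n = V n` is a
singleton. If only finitely many `n` are separable we are in the first case. Otherwise
Hausdorffness gives, for separable `n`, disjoint nonempty open `A n ⊆ U n` and `B n ⊆ V n`.
Shrinking `A n` to `A n ∩ V m` when it meets some `V m`, we may assume that `A n` misses every
`B k` except possibly `B (f n)`. It remains to pick an infinite set `M` of separable indices
with `f n ∉ M` unless `f n = n`: either some fibre of `f` is infinite, or all fibres are finite
and `M` is built greedily.
-/

open Set Filter Topology Function

theorem Set.Infinite.exists_infinite_subset_of_finite_fibres {S : Set ℕ} (hS : S.Infinite)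
    {f : ℕ → ℕ} (hfib : ∀ v, (S ∩ f ⁻¹' {v}).Finite) :
    ∃ M ⊆ S, M.Infinite ∧ ∀ n ∈ M, f n ∈ M → f n = n := by
  have hpre (s : Finset ℕ) : (S ∩ f ⁻¹' s).Finite :=
    (s.finite_toSet.biUnion fun v _ => hfib v).subset fun n hn => by simpa using hn
  obtain ⟨a, haS, ha⟩ := exists_seq_of_forall_finset_exists (· ∈ S)
    (fun m n => m ≠ n ∧ f m ≠ n ∧ f n ≠ m) fun s _ => by
      obtain ⟨y, ⟨hyS, hy⟩⟩ :=
        (hS.sdiff ((s.finite_toSet.union (s.finite_toSet.image f)).union (hpre s))).nonempty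
      simp only [mem_union, mem_image, Finset.mem_coe, mem_inter_iff, mem_preimage, not_or,
        not_exists, not_and] at hy
      exact ⟨y, hyS, fun x hx => ⟨fun h => hy.1.1 (h ▸ hx), fun h => hy.1.2 x hx h,
        fun h => hy.2 hyS (h ▸ hx)⟩⟩
  have ha_inj : Injective a := by
    intro i j hij
    by_contra hne
    rcases lt_or_gt_of_ne hne with h | h
    exacts [(ha i j h).1 hij, (ha j i h).1 hij.symm]
  refine ⟨range a, range_subset_iff.2 haS, infinite_range_of_injective ha_inj, ?_⟩
  rintro _ ⟨i, rfl⟩ ⟨j, hj⟩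
  rcases lt_trichotomy i j with h | rfl | h
  exacts [((ha i j h).2.1 hj.symm).elim, hj.symm, ((ha j i h).2.2 hj.symm).elim]

theorem Set.Infinite.exists_infinite_subset_eq_self_of_apply_mem {S : Set ℕ} (hS : S.Infinite)
    (f : ℕ → ℕ) : ∃ M ⊆ S, M.Infinite ∧ ∀ n ∈ M, f n ∈ M → f n = n := by
  by_cases hfib : ∃ v, (S ∩ f ⁻¹' {v}).Infinite
  · obtain ⟨v, hv⟩ := hfib
    refine ⟨(S ∩ f ⁻¹' {v}) \ {v}, fun n hn => hn.1.1, hv.sdiff (finite_singleton v), ?_⟩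
    rintro n ⟨⟨-, hn⟩, -⟩ ⟨-, hnv⟩
    exact (hnv hn).elim
  · push Not at hfib
    exact hS.exists_infinite_subset_of_finite_fibres hfib

theorem exists_disjoint_open_nonempty_subsets_of_ne {X : Type*} [TopologicalSpace X]
    [T2Space X] {U V : Set X} (hU : IsOpen U) (hV : IsOpen V) {x y : X} (hx : x ∈ U)
    (hy : y ∈ V) (hxy : x ≠ y) :
    ∃ A ⊆ U, ∃ B ⊆ V, IsOpen A ∧ A.Nonempty ∧ IsOpen B ∧ B.Nonempty ∧ Disjoint A B := by
  obtain ⟨W₁, W₂, hW₁, hW₂, hxW, hyW, hW⟩ := t2_separation hxy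
  exact ⟨U ∩ W₁, inter_subset_left, V ∩ W₂, inter_subset_left, hU.inter hW₁, ⟨x, hx, hxW⟩,
    hV.inter hW₂, ⟨y, hy, hyW⟩, hW.mono inter_subset_right inter_subset_right⟩

theorem eq_singleton_of_forall_mem_eq {X : Type*} {U V : Set X} (hU : U.Nonempty)
    (hV : V.Nonempty) (h : ∀ x ∈ U, ∀ y ∈ V, x = y) : U = V ∧ ∃ u, U = {u} := by
  obtain ⟨u, hu⟩ := hU
  obtain ⟨v, hv⟩ := hV
  have hU : U = {u} :=
    eq_singleton_iff_unique_mem.2 ⟨hu, fun x hx => (h x hx v hv).trans (h u hu v hv).symm⟩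
  have hV : V = {u} :=
    eq_singleton_iff_unique_mem.2 ⟨h u hu v hv ▸ hv, fun y hy => (h u hu y hy).symm⟩
  exact ⟨hU.trans hV.symm, u, hU⟩

theorem IsOpen.exists_nonempty_subset_disjoint_all_but_one {X ι : Type*} [TopologicalSpace X]
    [Nonempty ι] {V : ι → Set X} (hVopen : ∀ i, IsOpen (V i)) (hVdisj : Pairwise (Disjoint on V))
    {A : Set X} (hA : IsOpen A) (hAne : A.Nonempty) :
    ∃ A' ⊆ A, IsOpen A' ∧ A'.Nonempty ∧ ∃ m, ∀ i ≠ m, Disjoint A' (V i) := by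
  by_cases hmeet : ∃ m, (A ∩ V m).Nonempty
  · obtain ⟨m, hm⟩ := hmeet
    exact ⟨A ∩ V m, inter_subset_left, hA.inter (hVopen m), hm, m,
      fun i hi => (hVdisj hi.symm).mono_left inter_subset_right⟩
  · push Not at hmeet
    exact ⟨A, subset_rfl, hA, hAne, Classical.arbitrary ι,
      fun i _ => disjoint_iff_inter_eq_empty.2 (hmeet i)⟩

theorem stmt_2_general {X : Type*} [TopologicalSpace X] [T2Space X]
    (U V : ℕ → Set X)
    (hUopen : ∀ n, IsOpen (U n)) (hUne : ∀ n, (U n).Nonempty)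
    (hVopen : ∀ n, IsOpen (V n)) (hVne : ∀ n, (V n).Nonempty)
    (hVdisj : ∀ n m, n ≠ m → V n ∩ V m = ∅) :
    (∀ᶠ n in Filter.atTop, U n = V n ∧ ∃ u : X, U n = {u}) ∨
      (∃ (M : Set ℕ) (U' V' : ℕ → Set X), M.Infinite ∧
        (∀ n ∈ M, IsOpen (U' n) ∧ (U' n).Nonempty ∧ U' n ⊆ U n) ∧
        (∀ n ∈ M, IsOpen (V' n) ∧ (V' n).Nonempty ∧ V' n ⊆ V n) ∧
        (⋃ n ∈ M, U' n) ∩ (⋃ n ∈ M, V' n) = ∅) := by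
  set S : Set ℕ := {n | ∃ x ∈ U n, ∃ y ∈ V n, x ≠ y}
  rcases S.finite_or_infinite with hS | hS
  · left
    rw [← Nat.cofinite_eq_atTop]
    filter_upwards [hS.eventually_cofinite_notMem] with n hn
    simp only [S, mem_ofPred_eq, not_exists, not_and, not_not] at hn
    exact eq_singleton_of_forall_mem_eq (hUne n) (hVne n) hn
  right
  have hsep (n : ℕ) (hn : n ∈ S) :
      ∃ A ⊆ U n, ∃ B ⊆ V n, IsOpen A ∧ A.Nonempty ∧ IsOpen B ∧ B.Nonempty ∧ Disjoint A B := by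
    obtain ⟨x, hx, y, hy, hxy⟩ := hn
    exact exists_disjoint_open_nonempty_subsets_of_ne (hUopen n) (hVopen n) hx hy hxy
  choose! A hAU B hBV hAopen hAne hBopen hBne hAB using hsep
  have hshrink (n : ℕ) (hn : n ∈ S) :=
    (hAopen n hn).exists_nonempty_subset_disjoint_all_but_one hVopen
      (fun i j hij => disjoint_iff_inter_eq_empty.2 (hVdisj i j hij)) (hAne n hn)
  choose! A' hA'A hA'open hA'ne f hf using hshrink
  obtain ⟨M, hMS, hM, hfM⟩ := hS.exists_infinite_subset_eq_self_of_apply_mem f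
  refine ⟨M, A', B, hM, fun n hn => ⟨hA'open n (hMS hn), hA'ne n (hMS hn),
    (hA'A n (hMS hn)).trans (hAU n (hMS hn))⟩,
    fun n hn => ⟨hBopen n (hMS hn), hBne n (hMS hn), hBV n (hMS hn)⟩, ?_⟩
  refine disjoint_iff_inter_eq_empty.1 <| disjoint_iUnion₂_left.2 fun n hn =>
    disjoint_iUnion₂_right.2 fun m hm => ?_
  by_cases hmn : m = n
  · subst hmn
    exact (hAB m (hMS hm)).mono_left (hA'A m (hMS hm))
  · have hm_ne : m ≠ f n := fun h => hmn (h ▸ hfM n hn (h ▸ hm))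
    exact (hf n (hMS hn) m hm_ne).mono_right (hBV m (hMS hm))

/-- Two disjoint sequences of nonempty open sets either eventually coincide as
singletons or can be refined along an infinite set to families with disjoint unions. -/
theorem stmt_2 {X : Type*} [TopologicalSpace X] [T2Space X] [CompletelyRegularSpace X]
    (U V : ℕ → Set X)
    (hUopen : ∀ n, IsOpen (U n)) (hUne : ∀ n, (U n).Nonempty)
    (hUdisj : ∀ n m, n ≠ m → U n ∩ U m = ∅)
    (hVopen : ∀ n, IsOpen (V n)) (hVne : ∀ n, (V n).Nonempty)
    (hVdisj : ∀ n m, n ≠ m → V n ∩ V m = ∅) :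
    (∀ᶠ n in Filter.atTop, U n = V n ∧ ∃ u : X, U n = {u}) ∨
      (∃ (M : Set ℕ) (U' V' : ℕ → Set X), M.Infinite ∧
        (∀ n ∈ M, IsOpen (U' n) ∧ (U' n).Nonempty ∧ U' n ⊆ U n) ∧
        (∀ n ∈ M, IsOpen (V' n) ∧ (V' n).Nonempty ∧ V' n ⊆ V n) ∧
        (⋃ n ∈ M, U' n) ∩ (⋃ n ∈ M, V' n) = ∅) :=
  stmt_2_general U V hUopen hUne hVopen hVne hVdisj
end

section
/- A Hausdorff topological space X is a βω-space if and only if for every point x ∈ X and every injective sequence ζ = (x_n) whose range is discrete and has compact closure, there is at most one free ultrafilter p on ℕ such that x is the p-limit of ζ. -/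
open Set Filter Topology Function

lemma isolated_of_discrete {X : Type*} [TopologicalSpace X] {M : Set X}
    (h : DiscreteTopology M) {m : X} (hm : m ∈ M) :
    ∃ U : Set X, IsOpen U ∧ U ∩ M = {m} := by
  have ho : IsOpen ({⟨m, hm⟩} : Set M) := isOpen_discrete _
  rw [isOpen_induced_iff] at ho
  obtain ⟨U, hU, hpre⟩ := ho
  refine ⟨U, hU, ?_⟩
  ext z
  simp only [Set.mem_inter_iff, Set.mem_singleton_iff]
  constructor
  · rintro ⟨hzU, hzM⟩
    have : (⟨z, hzM⟩ : M) ∈ (Subtype.val ⁻¹' U : Set M) := hzU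
    rw [hpre] at this
    exact congrArg Subtype.val this
  · rintro rfl
    have : (⟨z, hm⟩ : M) ∈ ({⟨z, hm⟩} : Set M) := rfl
    rw [← hpre] at this
    exact ⟨this, hm⟩

/-- helper: an ultrafilter containing a singleton is pure -/
lemma uf_pure_of_singleton_mem {u : Ultrafilter ℕ} {n : ℕ} (h : ({n} : Set ℕ) ∈ u) :
    u = pure n := by
  obtain ⟨x, hx, rfl⟩ := Ultrafilter.eq_pure_of_finite_mem (Set.finite_singleton n) h
  simp_all

/-- key lemma: limits along distinct ultrafilters of an injective sequence with
discrete range in `Ultrafilter ℕ` are distinct. -/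
lemma keyUF (d : ℕ → Ultrafilter ℕ) (hinj : Function.Injective d)
    (hd : ∀ n, ∃ U : Set (Ultrafilter ℕ), IsOpen U ∧ U ∩ Set.range d = {d n})
    {p q : Ultrafilter ℕ} {y : Ultrafilter ℕ}
    (hp : Filter.Tendsto d p (nhds y)) (hq : Filter.Tendsto d q (nhds y)) : p = q := by
  -- choose basic clopen sets isolating each point of the range
  have hA : ∀ n, ∃ A : Set ℕ, A ∈ d n ∧ ∀ m, m ≠ n → A ∉ d m := by
    intro n
    obtain ⟨U, hUo, hUr⟩ := hd n
    have hdnU : d n ∈ U := by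
      have : d n ∈ ({d n} : Set (Ultrafilter ℕ)) := rfl
      rw [← hUr] at this
      exact this.1
    obtain ⟨t, ⟨A, rfl⟩, hdt, htU⟩ := ultrafilterBasis_is_basis.exists_subset_of_mem_open hdnU hUo
    refine ⟨A, hdt, fun m hm hAm => ?_⟩
    have : d m ∈ U ∩ Set.range d := ⟨htU hAm, ⟨m, rfl⟩⟩
    rw [hUr] at this
    exact hm (hinj this)
  choose A hA1 hA2 using hA
  -- disjointify
  set A' : ℕ → Set ℕ := fun n => A n \ ⋃ k ∈ Finset.range n, A k with hA'def
  have hA'mem : ∀ n, A' n ∈ d n := by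
    intro n
    have heq : (⋃ k ∈ Finset.range n, A k)ᶜ = ⋂ k ∈ Finset.range n, (A k)ᶜ := by
      simp [Set.compl_iUnion]
    have hcompl : (⋃ k ∈ Finset.range n, A k)ᶜ ∈ d n := by
      rw [heq]
      refine (Filter.biInter_finset_mem _).2 fun k hk => ?_
      have hkn : n ≠ k := fun h => by simp [h] at hk
      exact Ultrafilter.compl_mem_iff_notMem.2 (hA2 k n hkn)
    have h2 := Filter.inter_mem (hA1 n) hcompl
    have heq2 : A' n = A n ∩ (⋃ k ∈ Finset.range n, A k)ᶜ := Set.diff_eq _ _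
    rw [heq2]
    exact h2
  have hA'disj : ∀ m n, m ≠ n → A' m ∩ A' n = ∅ := by
    intro m n hmn
    rcases lt_or_gt_of_ne hmn with h | h
    · ext k; simp only [Set.mem_inter_iff, Set.mem_empty_iff_false, iff_false]
      rintro ⟨hkm, hkn⟩
      exact hkn.2 (Set.mem_biUnion (Finset.mem_range.mpr h) hkm.1)
    · ext k; simp only [Set.mem_inter_iff, Set.mem_empty_iff_false, iff_false]
      rintro ⟨hkm, hkn⟩
      exact hkm.2 (Set.mem_biUnion (Finset.mem_range.mpr h) hkn.1)
  by_contra hpq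
  -- get a set separating p and q
  have hS : ∃ S : Set ℕ, S ∈ p ∧ Sᶜ ∈ q := by
    by_contra hc
    push_neg at hc
    apply hpq
    apply Ultrafilter.coe_injective
    apply Filter.ext
    intro s
    constructor
    · intro hs
      by_contra hsq
      exact (hc s hs) (Ultrafilter.compl_mem_iff_notMem.2 hsq)
    · intro hs
      by_contra hsp
      have := hc sᶜ (Ultrafilter.compl_mem_iff_notMem.2 hsp)
      rw [compl_compl] at this
      exact this hs
  obtain ⟨S, hSp, hSq⟩ := hS
  set B : Set ℕ := ⋃ n ∈ S, A' n with hBdef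
  -- B ∈ y
  have hBy : B ∈ y := by
    by_contra hBy
    have hBc : Bᶜ ∈ y := Ultrafilter.compl_mem_iff_notMem.2 hBy
    have hopen : IsOpen {u : Ultrafilter ℕ | Bᶜ ∈ u} := ultrafilter_isOpen_basic _
    have hnhds : {u : Ultrafilter ℕ | Bᶜ ∈ u} ∈ nhds y := hopen.mem_nhds hBc
    have hpre : {n | Bᶜ ∈ d n} ∈ p := hp hnhds
    obtain ⟨n, hnS, hnB⟩ := Ultrafilter.nonempty_of_mem (Filter.inter_mem hSp hpre)
    have hBn : B ∈ d n := Filter.mem_of_superset (hA'mem n) (Set.subset_biUnion_of_mem hnS)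
    exact (Ultrafilter.compl_mem_iff_notMem.1 hnB) hBn
  -- contradiction via q
  have hopen : IsOpen {u : Ultrafilter ℕ | B ∈ u} := ultrafilter_isOpen_basic _
  have hnhds : {u : Ultrafilter ℕ | B ∈ u} ∈ nhds y := hopen.mem_nhds hBy
  have hpre : {n | B ∈ d n} ∈ q := hq hnhds
  obtain ⟨m, hmS, hmB⟩ := Ultrafilter.nonempty_of_mem (Filter.inter_mem hSq hpre)
  have hBA'm : B ∩ A' m ∈ d m := Filter.inter_mem hmB (hA'mem m)
  have : B ∩ A' m = ∅ := by
    ext k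
    simp only [Set.mem_inter_iff, Set.mem_empty_iff_false, iff_false, hBdef]
    rintro ⟨hkB, hkm⟩
    simp only [Set.mem_iUnion] at hkB
    obtain ⟨n, hnS, hkn⟩ := hkB
    have hnm : n ≠ m := fun h => hmS (h ▸ hnS)
    have h4 : k ∈ A' n ∩ A' m := ⟨hkn, hkm⟩
    rw [hA'disj n m hnm] at h4
    exact h4
  rw [this] at hBA'm
  exact (d m).empty_notMem hBA'm

noncomputable def betaEquiv : StoneCech ℕ ≃ₜ Ultrafilter ℕ := by
  have hpc : Continuous (pure : ℕ → Ultrafilter ℕ) := continuous_of_discreteTopology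
  let h : StoneCech ℕ → Ultrafilter ℕ := stoneCechExtend hpc
  let k : Ultrafilter ℕ → StoneCech ℕ := Ultrafilter.extend stoneCechUnit
  have hh : Continuous h := continuous_stoneCechExtend hpc
  have hk : Continuous k := continuous_ultrafilter_extend _
  have hk_pure : ∀ n : ℕ, k (pure n) = stoneCechUnit n := fun n =>
    congrFun (ultrafilter_extend_extends (stoneCechUnit : ℕ → StoneCech ℕ)) n
  have hh_unit : ∀ n : ℕ, h (stoneCechUnit n) = pure n := fun n =>
    congrFun (stoneCechExtend_extends hpc) n
  have hkh : ∀ a, k (h a) = a := by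
    have : k ∘ h = id := stoneCech_hom_ext (hk.comp hh) continuous_id (by
      funext n
      simp only [Function.comp_apply, id_eq, hh_unit n, hk_pure n])
    exact fun a => congrFun this a
  have hhk : ∀ u, h (k u) = u := by
    have : h ∘ k = id := by
      apply Continuous.ext_on denseRange_pure (hh.comp hk) continuous_id
      rintro _ ⟨n, rfl⟩
      simp only [Function.comp_apply, id_eq, hk_pure n, hh_unit n]
    exact fun u => congrFun this u
  exact Homeomorph.mk ⟨h, k, hkh, hhk⟩ hh hk

/-- A Hausdorff space is a βω-space iff each discrete exact sequence with
compact closure of its range has at most one free-ultrafilter limit at each point. -/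
theorem stmt_3 {X : Type*} [TopologicalSpace X] [T2Space X] :
    BetaOmegaSpace X ↔
      ∀ (x : X) (ζ : ℕ → X), Function.Injective ζ →
        DiscreteTopology ↥(Set.range ζ) → IsCompact (closure (Set.range ζ)) →
        ∀ p q : Ultrafilter ℕ, FreeUF p → FreeUF q →
          PLim p ζ x → PLim q ζ x → p = q := by
  constructor
  · -- βω-space ⇒ uniqueness of ultrafilter limits
    intro hB x ζ hinj hdisc hcomp p q hpf hqf hp hq
    set M : Set X := Set.range ζ with hM
    obtain ⟨e⟩ := hB M (Set.countable_range ζ) (Set.infinite_range_of_injective hinj)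
      hdisc hcomp
    let φ : closure M ≃ₜ Ultrafilter ℕ := e.trans betaEquiv
    have hx : x ∈ closure M := by
      rw [mem_closure_iff]
      intro o ho hxo
      obtain ⟨k, hk⟩ := Ultrafilter.nonempty_of_mem (hp (ho.mem_nhds hxo))
      exact ⟨ζ k, hk, ⟨k, rfl⟩⟩
    let g : ℕ → closure M := fun n => ⟨ζ n, subset_closure ⟨n, rfl⟩⟩
    have hginj : Function.Injective g := fun a b hab => hinj (congrArg Subtype.val hab)
    let d : ℕ → Ultrafilter ℕ := fun n => φ (g n)
    have hdinj : Function.Injective d := fun a b hab => hginj (φ.injective hab)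
    have hd : ∀ n, ∃ U : Set (Ultrafilter ℕ), IsOpen U ∧ U ∩ Set.range d = {d n} := by
      intro n
      obtain ⟨U, hU, hUeq⟩ := isolated_of_discrete hdisc (⟨n, rfl⟩ : ζ n ∈ M)
      refine ⟨φ '' (Subtype.val ⁻¹' U), φ.isOpenMap _ (hU.preimage continuous_subtype_val), ?_⟩
      ext w
      simp only [Set.mem_inter_iff, Set.mem_singleton_iff]
      constructor
      · rintro ⟨⟨b, hbU, hbw⟩, ⟨m, rfl⟩⟩
        have hbg : b = g m := φ.injective (by rw [hbw])
        have : ζ m ∈ U ∩ M := ⟨by rw [hbg] at hbU; exact hbU, ⟨m, rfl⟩⟩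
        rw [hUeq] at this
        have := hinj this
        rw [this]
      · rintro rfl
        have hnU : ζ n ∈ U := by
          have : ζ n ∈ U ∩ M := by rw [hUeq]; rfl
          exact this.1
        exact ⟨⟨g n, hnU, rfl⟩, ⟨n, rfl⟩⟩
    have hgp : Filter.Tendsto g p (nhds ⟨x, hx⟩) := tendsto_subtype_rng.mpr hp
    have hgq : Filter.Tendsto g q (nhds ⟨x, hx⟩) := tendsto_subtype_rng.mpr hq
    exact keyUF d hdinj hd ((φ.continuous.tendsto _).comp hgp)
      ((φ.continuous.tendsto _).comp hgq)
  · -- uniqueness of ultrafilter limits ⇒ βω-space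
    intro hyp M hMc hMi hMd hMcl
    haveI : Countable M := hMc.to_subtype
    haveI : Infinite M := hMi.to_subtype
    obtain ⟨dEnum⟩ := nonempty_denumerable M
    let e : ℕ ≃ M := (Denumerable.eqv M).symm
    let ζ : ℕ → X := fun n => (e n : X)
    have hζinj : Function.Injective ζ := fun a b hab => e.injective (Subtype.ext hab)
    have hζmem : ∀ n, ζ n ∈ M := fun n => (e n).2
    have hrange : Set.range ζ = M := by
      ext z
      constructor
      · rintro ⟨n, rfl⟩; exact hζmem n
      · intro hz; exact ⟨e.symm ⟨z, hz⟩, congrArg Subtype.val (e.apply_symm_apply ⟨z, hz⟩)⟩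
    haveI : CompactSpace (closure M) := isCompact_iff_compactSpace.mp hMcl
    let g : ℕ → closure M := fun n => ⟨ζ n, subset_closure (hζmem n)⟩
    let G : Ultrafilter ℕ → closure M := Ultrafilter.extend g
    have hGc : Continuous G := continuous_ultrafilter_extend g
    have hGpure : ∀ n, G (pure n) = g n := fun n => congrFun (ultrafilter_extend_extends g) n
    have htend : ∀ w : Ultrafilter ℕ, Filter.Tendsto g w (nhds (G w)) := fun w =>
      ultrafilter_extend_eq_iff.mp rfl
    have hXtend : ∀ w : Ultrafilter ℕ, Filter.Tendsto ζ w (nhds ((G w : X))) := fun w =>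
      tendsto_subtype_rng.mp (htend w)
    -- a free ultrafilter cannot converge to a point of M
    have hfree_ne : ∀ (w : Ultrafilter ℕ) (n : ℕ), FreeUF w →
        Filter.Tendsto ζ w (nhds (ζ n)) → False := by
      intro w n hw htw
      obtain ⟨U, hU, hUeq⟩ := isolated_of_discrete hMd (hζmem n)
      have hmem : {k | ζ k ∈ U} ∈ w := htw (hU.mem_nhds (by
        have : ζ n ∈ U ∩ M := by rw [hUeq]; rfl
        exact this.1))
      have : {k | ζ k ∈ U} = {n} := by
        ext k
        simp only [Set.mem_setOf_eq, Set.mem_singleton_iff]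
        constructor
        · intro hk
          have : ζ k ∈ U ∩ M := ⟨hk, hζmem k⟩
          rw [hUeq] at this
          exact hζinj this
        · rintro rfl
          have : ζ k ∈ U ∩ M := by rw [hUeq]; rfl
          exact this.1
      rw [this] at hmem
      exact hw n hmem
    have hGinj : Function.Injective G := by
      intro u v huv
      by_cases hu : FreeUF u
      · by_cases hv : FreeUF v
        · have hq' : Filter.Tendsto ζ v (nhds ((G u : X))) := by rw [huv]; exact hXtend v
          exact hyp ((G u : X)) ζ hζinj (hrange ▸ hMd) (hrange ▸ hMcl) u v hu hv
            (hXtend u) hq'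
        · simp only [FreeUF, not_forall, not_not] at hv
          obtain ⟨n, hn⟩ := hv
          have hveq : v = pure n := uf_pure_of_singleton_mem hn
          have : Filter.Tendsto ζ u (nhds (ζ n)) := by
            have h1 : (G u : X) = ζ n := by
              rw [huv, hveq, hGpure]
            rw [← h1]; exact hXtend u
          exact absurd this (fun h => hfree_ne u n hu h)
      · simp only [FreeUF, not_forall, not_not] at hu
        obtain ⟨n, hn⟩ := hu
        have hueq : u = pure n := uf_pure_of_singleton_mem hn
        by_cases hv : FreeUF v
        · have : Filter.Tendsto ζ v (nhds (ζ n)) := by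
            have h1 : (G v : X) = ζ n := by
              rw [← huv, hueq, hGpure]
            rw [← h1]; exact hXtend v
          exact absurd this (fun h => hfree_ne v n hv h)
        · simp only [FreeUF, not_forall, not_not] at hv
          obtain ⟨m, hm⟩ := hv
          have hveq : v = pure m := uf_pure_of_singleton_mem hm
          have : g n = g m := by
            rw [← hGpure n, ← hGpure m, ← hueq, ← hveq, huv]
          have h2 : (g n : X) = (g m : X) := congrArg Subtype.val this
          have hnm : n = m := hζinj h2
          rw [hueq, hveq, hnm]
    have hGsurj : Function.Surjective G := by
      intro c
      have hcl : IsClosed (Set.range G) := (isCompact_range hGc).isClosed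
      have hsub : Set.range g ⊆ Set.range G := by
        rintro _ ⟨n, rfl⟩
        exact ⟨pure n, hGpure n⟩
      have hdense : c ∈ closure (Set.range g) := by
        rw [mem_closure_iff]
        intro o ho hco
        rw [isOpen_induced_iff] at ho
        obtain ⟨U, hU, rfl⟩ := ho
        have hcU : (c : X) ∈ U := hco
        obtain ⟨z, hzU, hzM⟩ := mem_closure_iff.mp c.2 U hU hcU
        set k : ℕ := e.symm ⟨z, hzM⟩ with hk
        have hζk : ζ k = z := congrArg Subtype.val (e.apply_symm_apply ⟨z, hzM⟩)
        refine ⟨g k, ?_, ⟨k, rfl⟩⟩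
        show (g k : X) ∈ U
        rw [show (g k : X) = ζ k from rfl, hζk]
        exact hzU
      have : c ∈ Set.range G := by
        have := closure_mono hsub hdense
        rwa [hcl.closure_eq] at this
      exact this
    let E : Ultrafilter ℕ ≃ closure M := Equiv.ofBijective G ⟨hGinj, hGsurj⟩
    have hEc : Continuous E := hGc
    let H : Ultrafilter ℕ ≃ₜ closure M := hEc.homeoOfEquivCompactToT2
    exact ⟨H.symm.trans betaEquiv.symm⟩
end

section
/- Let (X_α)_{α∈A} be a family of topological spaces, and for each α let (R_{α,n})_{n∈ℕ} be a sequence of nonempty subsets of X_α; put R_n = ∏_α R_{α,n}. Then the sequence of sets (R_n) is locally finite in ∏_α X_α if and only if ⋂_{α∈A} u_{X_α}((R_{α,n})_n) = ∅. -/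
open Set Filter Topology Function

/-- `u_Z(ξ)` for a sequence of subsets: the set of free ultrafilters `p` such that the sequence
`p`-accumulates at some point of `Z`. -/
def uSets {Z : Type*} [TopologicalSpace Z] (ξ : ℕ → Set Z) : Set (Ultrafilter ℕ) :=
  {p | FreeUF p ∧ ∃ x : Z, ∀ U ∈ nhds x, {n | (U ∩ ξ n).Nonempty} ∈ p}

lemma freeUF_le_cofinite {p : Ultrafilter ℕ} (hp : FreeUF p) : (p : Filter ℕ) ≤ cofinite := by
  rw [Filter.le_cofinite_iff_compl_singleton_mem]
  intro n
  exact (Ultrafilter.compl_mem_iff_notMem).2 (hp n)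

lemma freeUF_not_finite_mem {p : Ultrafilter ℕ} (hp : FreeUF p) {s : Set ℕ}
    (hs : s.Finite) : s ∉ p := by
  intro hmem
  have h1 : sᶜ ∈ p := freeUF_le_cofinite hp hs.compl_mem_cofinite
  have := Filter.inter_mem hmem h1
  simp at this

/-- The sequence of boxes `R_n = ∏_α R_{α,n}` is locally finite in the product
iff the intersection over `α` of the sets `u_{X_α}((R_{α,n})_n)` is empty. -/
theorem stmt_8 {A : Type*} {X : A → Type*} [∀ a, TopologicalSpace (X a)]
    (R : ∀ a, ℕ → Set (X a)) (hne : ∀ a n, (R a n).Nonempty) :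
    LocallyFinite (fun n => {f : ∀ a, X a | ∀ a, f a ∈ R a n}) ↔
      ⋂ a, uSets (R a) = ∅ := by
  rcases isEmpty_or_nonempty A with hA | hA
  · -- A empty: both sides are false
    refine iff_of_false ?_ ?_
    · intro h
      obtain ⟨t, ht, hfin⟩ := h (fun a => (hA.elim a))
      have : {n : ℕ | ({f : ∀ a, X a | ∀ a, f a ∈ R a n} ∩ t).Nonempty} = Set.univ := by
        ext n
        simp only [Set.mem_setOf_eq, Set.mem_univ, iff_true]
        exact ⟨fun a => hA.elim a, fun a => hA.elim a, mem_of_mem_nhds ht⟩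
      rw [this] at hfin
      exact Set.infinite_univ hfin
    · rw [Set.iInter_of_empty]
      exact fun h => (Set.univ_nonempty (α := Ultrafilter ℕ)).ne_empty h
  constructor
  · -- locally finite → intersection empty
    intro h
    rw [Set.eq_empty_iff_forall_notMem]
    intro p hp
    simp only [Set.mem_iInter] at hp
    have hfree : FreeUF p := (hp (Classical.arbitrary A)).1
    choose x hx using fun a => (hp a).2
    obtain ⟨t, ht, hfin⟩ := h x
    -- show the finite set is in p, contradiction
    rw [nhds_pi, Filter.mem_pi] at ht
    obtain ⟨I, hIfin, V, hV, hVt⟩ := ht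
    have hmem : (⋂ a ∈ I, {n | (V a ∩ R a n).Nonempty}) ∈ p := by
      exact (Filter.biInter_mem hIfin).2 fun a _ => hx a (V a) (hV a)
    have hsub : (⋂ a ∈ I, {n | (V a ∩ R a n).Nonempty}) ⊆
        {n : ℕ | ({f : ∀ a, X a | ∀ a, f a ∈ R a n} ∩ t).Nonempty} := by
      intro n hn
      simp only [Set.mem_iInter, Set.mem_setOf_eq] at hn
      classical
      choose g hg using fun a (ha : a ∈ I) => hn a ha
      refine ⟨fun a => if ha : a ∈ I then g a ha else (hne a n).some, ?_, ?_⟩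
      · intro a
        by_cases ha : a ∈ I
        · simp only [ha, dif_pos]; exact (hg a ha).2
        · simp only [ha, dif_neg, not_false_iff]; exact (hne a n).some_mem
      · apply hVt
        intro a ha
        simp only [ha, dif_pos]
        exact (hg a ha).1
    exact freeUF_not_finite_mem hfree hfin (Filter.mem_of_superset hmem hsub)
  · -- intersection empty → locally finite
    intro hI
    by_contra hLF
    rw [LocallyFinite] at hLF
    push_neg at hLF
    obtain ⟨x, hx⟩ := hLF
    -- hx : ∀ t ∈ 𝓝 x, ¬ {n | (Box n ∩ t).Nonempty}.Finite
    set g : Set (∀ a, X a) → Set ℕ :=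
      fun U => {n | ({f : ∀ a, X a | ∀ a, f a ∈ R a n} ∩ U).Nonempty} with hgdef
    have hmono : Monotone g := by
      intro U V hUV n ⟨f, hf1, hf2⟩
      exact ⟨f, hf1, hUV hf2⟩
    set F := (𝓝 x).lift' g with hFdef
    have hNB : NeBot (F ⊓ cofinite) := by
      rw [Filter.inf_neBot_iff]
      intro s hs s' hs'
      rw [hFdef, Filter.mem_lift'_sets hmono] at hs
      obtain ⟨t, ht, hts⟩ := hs
      have hinf : (g t).Infinite := hx t ht
      have : (g t ∩ s').Nonempty := by
        have : (g t \ s'ᶜ).Infinite := hinf.diff hs'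
        rw [Set.diff_compl] at this
        exact this.nonempty
      exact this.mono (Set.inter_subset_inter_left _ hts)
    set p := Ultrafilter.of (F ⊓ cofinite) with hpdef
    have hple : (p : Filter ℕ) ≤ F ⊓ cofinite := Ultrafilter.of_le _
    have hfree : FreeUF p := by
      intro n
      refine (Ultrafilter.compl_mem_iff_notMem).1 ?_
      exact hple (Filter.mem_inf_of_right ((Set.finite_singleton n).compl_mem_cofinite))
    have hpmem : p ∈ ⋂ a, uSets (R a) := by
      rw [Set.mem_iInter]
      intro a
      refine ⟨hfree, x a, fun U hU => ?_⟩
      have hVnh : (fun f : ∀ a, X a => f a) ⁻¹' U ∈ 𝓝 x :=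
        (continuous_apply a).continuousAt hU
      have hgV : g ((fun f : ∀ a, X a => f a) ⁻¹' U) ∈ p :=
        hple (Filter.mem_inf_of_left (Filter.mem_lift' hVnh))
      refine Filter.mem_of_superset hgV ?_
      rintro n ⟨f, hfR, hfU⟩
      exact ⟨f a, hfU, hfR a⟩
    rw [hI] at hpmem
    exact hpmem
end

section
/- A topological space X is countably compact if and only if for every injective sequence ζ = (x_n) in X whose range is a discrete subspace, there exists a free ultrafilter p on ℕ and a point x ∈ X such that x is the p-limit of ζ. -/
open Set Filter Topology Function

/-- Countable compactness: every countable open cover has a finite subcover. -/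
def CountablyCompact (X : Type*) [TopologicalSpace X] : Prop :=
  ∀ U : ℕ → Set X, (∀ n, IsOpen (U n)) → (⋃ n, U n) = Set.univ →
    ∃ t : Finset ℕ, (⋃ n ∈ t, U n) = Set.univ

/-!
Countable compactness of `X` means that every sequence has a cluster point along the cofinite
filter, i.e. a limit along some ultrafilter finer than the cofinite filter, which is exactly a free
ultrafilter. Conversely, in a T₁ space an infinite set without accumulation points is discrete, so
an injective enumeration of it has discrete range; a `p`-limit for a free `p` would be an
accumulation point of that range, since the fibres of an injective sequence are finite.
-/

theorem freeUF_iff_le_cofinite {p : Ultrafilter ℕ} : FreeUF p ↔ (p : Filter ℕ) ≤ cofinite := by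
  refine ⟨fun hp => ?_, fun hp n hn => ?_⟩
  · rcases p.le_cofinite_or_eq_pure with hle | ⟨a, rfl⟩
    · exact hle
    · exact absurd (Filter.mem_pure.2 rfl) (hp a)
  · exact Ultrafilter.compl_notMem_iff.2 hn (hp (finite_singleton n).compl_mem_cofinite)

theorem countablyCompact_iff_countablyCompactSpace {X : Type*} [TopologicalSpace X] :
    CountablyCompact X ↔ CountablyCompactSpace X := by
  simp only [← isCountablyCompact_univ_iff, isCountablyCompact_iff_countable_open_cover,
    univ_subset_iff, CountablyCompact]

section

variable {X : Type*} [TopologicalSpace X]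

theorem CountablyCompactSpace.exists_freeUF_pLim [CountablyCompactSpace X] (ζ : ℕ → X) :
    ∃ (p : Ultrafilter ℕ) (x : X), FreeUF p ∧ PLim p ζ x := by
  obtain ⟨x, -, hx⟩ := CountablyCompactSpace.isCountablyCompact_univ.seq_clusterPt ζ
    (Eventually.of_forall fun n => mem_univ (ζ n))
  rw [← Nat.cofinite_eq_atTop, mapClusterPt_iff_ultrafilter] at hx
  obtain ⟨p, hp, hζ⟩ := hx
  exact ⟨p, x, freeUF_iff_le_cofinite.2 hp, hζ⟩

theorem PLim.accPt_range {p : Ultrafilter ℕ} {ζ : ℕ → X} {x : X} (h : PLim p ζ x)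
    (hp : FreeUF p) (hζ : Injective ζ) : AccPt x (𝓟 (range ζ)) := by
  have hne : ∀ᶠ n in (p : Filter ℕ), ζ n ∈ ({x}ᶜ : Set X) :=
    freeUF_iff_le_cofinite.1 hp ((finite_singleton x).preimage hζ.injOn).compl_mem_cofinite
  have hlim : Tendsto ζ p (𝓝[≠] x ⊓ 𝓟 (range ζ)) :=
    tendsto_inf.2 ⟨tendsto_nhdsWithin_iff.2 ⟨h, hne⟩,
      tendsto_principal.2 (Eventually.of_forall mem_range_self)⟩
  exact (p.map ζ).neBot.mono hlim

theorem countablyCompactSpace_of_forall_freeUF_pLim [T1Space X]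
    (h : ∀ ζ : ℕ → X, Injective ζ → DiscreteTopology (range ζ) →
      ∃ (p : Ultrafilter ℕ) (x : X), FreeUF p ∧ PLim p ζ x) :
    CountablyCompactSpace X := by
  rw [← isCountablyCompact_univ_iff, isCountablyCompact_iff_infinite_subset_has_accPt]
  intro B _ hB
  by_contra! hnoAcc
  set ζ : ℕ → X := (↑) ∘ hB.natEmbedding
  have hζ : Injective ζ := Subtype.val_injective.comp hB.natEmbedding.injective
  have hζB : 𝓟 (range ζ) ≤ 𝓟 B := principal_mono.2 (range_subset_iff.2 fun n => Subtype.prop _)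
  have hdisc : DiscreteTopology (range ζ) :=
    discreteTopology_of_noAccPts fun x _ hx => hnoAcc x trivial (hx.mono hζB)
  obtain ⟨p, x, hp, hx⟩ := h ζ hζ hdisc
  exact hnoAcc x trivial ((hx.accPt_range hp hζ).mono hζB)

end

/-- X is countably compact iff every discrete exact sequence has a `p`-limit for
some free ultrafilter `p`. -/
theorem stmt_9 {X : Type*} [TopologicalSpace X] [T1Space X] :
    CountablyCompact X ↔
      ∀ ζ : ℕ → X, Function.Injective ζ → DiscreteTopology ↥(Set.range ζ) →
        ∃ (p : Ultrafilter ℕ) (x : X), FreeUF p ∧ PLim p ζ x := by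
  rw [countablyCompact_iff_countablyCompactSpace]
  exact ⟨fun _ ζ _ _ => CountablyCompactSpace.exists_freeUF_pLim ζ,
    countablyCompactSpace_of_forall_freeUF_pLim⟩
end

section
/- There exist free ultrafilters p, q on ℕ and subspaces X, Y of βℕ such that X is p-compact, Y is sequentially q-compact, and X × Y is not pseudocompact. Specifically, one can take X a minimal p-compact subspace of βℕ containing ℕ (which has cardinality ≤ 2^ℵ₀) and Y = ℕ ∪ (βℕ \ X). -/
open Set Filter Topology Function

/-- Pseudocompactness: every continuous real-valued function is bounded. -/
def Pseudocompact (Y : Type*) [TopologicalSpace Y] : Prop :=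
  ∀ f : Y → ℝ, Continuous f → ∃ C : ℝ, ∀ y, |f y| ≤ C

/-- `p`-compactness: every sequence has a `p`-limit. -/
def PCompact (p : Ultrafilter ℕ) (X : Type*) [TopologicalSpace X] : Prop :=
  ∀ x : ℕ → X, ∃ l : X, PLim p x l

/-- Sequential `q`-compactness. -/
def SeqPCompact (p : Ultrafilter ℕ) (X : Type*) [TopologicalSpace X] : Prop :=
  ∀ M : Set X, M.Infinite → ∃ L : Set X, L ⊆ M ∧ L.Infinite ∧
    ∀ x : ℕ → X, Function.Injective x → (∀ n, x n ∈ L) → ∃ l : X, PLim p x l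

/-!
Work in the space of ultrafilters on `ℕ`, which is homeomorphic to `βℕ`. For a free `p`, the
values of iterated `p`-limits along well-founded countably branching trees with leaves in `ℕ`
form a `p`-compact set `X ⊇ ℕ` with at most `𝔠` points, so at most `𝔠` ultrafilters are
Rudin–Keisler below a point of `X`. An independent family of size `𝔠` yields `2 ^ 𝔠`
ultrafilters, so some free `q` is not. In `Y = ℕ ∪ (βℕ \ X)` every infinite set contains an
infinite set with pairwise disjoint members, and the `q`-limit of an injective sequence in it is
Rudin–Keisler above `q`, hence outside `X`. Finally `X ∩ Y = ℕ` consists of isolated points, so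
the diagonal of `ℕ` is a closed infinite set of isolated points of `X × Y`.
-/

universe u

open Cardinal

noncomputable def ultrafilterHomeomorphStoneCech (α : Type*) [TopologicalSpace α]
    [DiscreteTopology α] : Ultrafilter α ≃ₜ StoneCech α where
  toFun := Ultrafilter.extend stoneCechUnit
  invFun := stoneCechExtend (continuous_of_discreteTopology (f := (pure : α → Ultrafilter α)))
  left_inv := congrFun <| denseRange_pure.equalizer
    ((continuous_stoneCechExtend _).comp (continuous_ultrafilter_extend _)) continuous_id <|
    funext fun a => by simp [stoneCechExtend_stoneCechUnit]
  right_inv := congrFun <| stoneCech_hom_ext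
    ((continuous_ultrafilter_extend _).comp (continuous_stoneCechExtend _)) continuous_id <|
    funext fun a => by simp [stoneCechExtend_stoneCechUnit]
  continuous_toFun := continuous_ultrafilter_extend _
  continuous_invFun := continuous_stoneCechExtend _

theorem Ultrafilter.tendsto_bind {α : Type*} (q : Ultrafilter ℕ) (x : ℕ → Ultrafilter α) :
    Tendsto x q (𝓝 (q.bind x)) := by
  rw [Tendsto, ← Ultrafilter.coe_map, ultrafilter_converges_iff]
  rfl

section Transfer

variable {A B : Type*} [TopologicalSpace A] [TopologicalSpace B] {p : Ultrafilter ℕ}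

theorem PCompact.of_surjective {f : A → B} (hf : Continuous f) (hs : Surjective f)
    (h : PCompact p A) : PCompact p B := fun x => by
  obtain ⟨l, hl⟩ := h (surjInv hs ∘ x)
  refine ⟨f l, ?_⟩
  simpa [PLim, comp_def, surjInv_eq hs] using (hf.tendsto l).comp hl

theorem Pseudocompact.of_surjective {f : A → B} (hf : Continuous f) (hs : Surjective f)
    (h : Pseudocompact A) : Pseudocompact B := fun g hg => by
  obtain ⟨C, hC⟩ := h (g ∘ f) (hg.comp hf)
  exact ⟨C, hs.forall.2 hC⟩

theorem SeqPCompact.of_homeomorph (e : A ≃ₜ B) (h : SeqPCompact p A) : SeqPCompact p B := by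
  intro M hM
  obtain ⟨L, hLM, hL, hlim⟩ := h (e ⁻¹' M) (hM.preimage (by simp))
  refine ⟨e '' L, image_subset_iff.2 hLM, hL.image e.injective.injOn, fun x hx hxL => ?_⟩
  obtain ⟨l, hl⟩ := hlim (e.symm ∘ x) (e.symm.injective.comp hx) fun n => by
    simpa [← e.image_symm, ← e.preimage_symm] using hxL n
  refine ⟨e l, ?_⟩
  simpa [PLim, comp_def] using (e.continuous.tendsto l).comp hl

end Transfer

theorem Pseudocompact.finite_of_isClosed_of_isOpen_singleton {Z : Type*} [TopologicalSpace Z]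
    (h : Pseudocompact Z) {S : Set Z} (hS : IsClosed S) (hiso : ∀ z ∈ S, IsOpen ({z} : Set Z)) :
    S.Finite := by
  classical
  by_contra hinf
  let ι := Set.Infinite.natEmbedding S hinf
  let g : Z → ℝ := fun z => (invFun (Subtype.val ∘ ι) z : ℕ)
  have hcont : Continuous (S.indicator g) := by
    refine continuous_iff_continuousAt.2 fun z => ?_
    by_cases hz : z ∈ S
    · rw [ContinuousAt, (isOpen_singleton_iff_nhds_eq_pure z).1 (hiso z hz)]
      exact tendsto_pure_nhds _ _
    · refine (continuousAt_const (y := (0 : ℝ))).congr ?_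
      filter_upwards [hS.isOpen_compl.mem_nhds hz] with w hw
      exact (indicator_of_notMem hw g).symm
  obtain ⟨C, hC⟩ := h _ hcont
  obtain ⟨n, hn⟩ := exists_nat_gt C
  have hgn : S.indicator g (ι n) = n := by
    rw [indicator_of_mem (ι n).2]
    exact congrArg Nat.cast (leftInverse_invFun (Subtype.val_injective.comp ι.injective) n)
  linarith [hC (ι n), le_abs_self (S.indicator g (ι n))]

theorem not_pseudocompact_prod_of_infinite_inter {E : Type*} [TopologicalSpace E] [T2Space E]
    {X Y : Set E} (hinf : (X ∩ Y).Infinite) (hiso : ∀ a ∈ X ∩ Y, IsOpen ({a} : Set E)) :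
    ¬ Pseudocompact (X × Y) := by
  intro h
  let diag : Set (X × Y) := {z | (z.1 : E) = z.2}
  have hclosed : IsClosed diag :=
    isClosed_eq (continuous_subtype_val.comp continuous_fst)
      (continuous_subtype_val.comp continuous_snd)
  have hopen : ∀ z ∈ diag, IsOpen ({z} : Set (X × Y)) := by
    rintro ⟨x, y⟩ (hxy : (x : E) = y)
    have hx : (x : E) ∈ X ∩ Y := ⟨x.2, hxy ▸ y.2⟩
    have hsingle : ({(x, y)} : Set (X × Y)) =
        (Subtype.val ⁻¹' {(x : E)}) ×ˢ (Subtype.val ⁻¹' {(x : E)}) := by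
      ext ⟨x', y'⟩
      simp [Prod.ext_iff, Subtype.ext_iff, hxy]
    rw [hsingle]
    exact ((hiso _ hx).preimage continuous_subtype_val).prod
      ((hiso _ hx).preimage continuous_subtype_val)
  refine hinf (((h.finite_of_isClosed_of_isOpen_singleton hclosed hopen).image
    fun z => (z.1 : E)).subset fun a ha => ?_)
  exact ⟨(⟨a, ha.1⟩, ⟨a, ha.2⟩), rfl, rfl⟩

namespace Ultrafilter

variable {α : Type*}

theorem isOpen_singleton_pure (a : α) : IsOpen ({pure a} : Set (Ultrafilter α)) := by
  convert ultrafilter_isOpen_basic {a}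
  ext u
  rw [mem_singleton_iff, mem_ofPred_eq, ← coe_le_coe, coe_pure, Filter.le_pure_iff, mem_coe]

theorem exists_map_bind_eq (q : Ultrafilter ℕ) {x : ℕ → Ultrafilter α} {B : ℕ → Set α}
    (hB : ∀ n, B n ∈ x n) (hdisj : Pairwise (Disjoint on B)) :
    ∃ f : α → ℕ, (q.bind x).map f = q := by
  classical
  let f : α → ℕ := fun a => if h : ∃ n, a ∈ B n then h.choose else 0
  have hf : ∀ n, ∀ a ∈ B n, f a = n := fun n a ha => by
    have h : ∃ n, a ∈ B n := ⟨n, ha⟩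
    simp only [f, dif_pos h]
    by_contra hne
    exact (hdisj hne).ne_of_mem h.choose_spec ha rfl
  refine ⟨f, coe_le_coe.1 fun s hs => ?_⟩
  change {n | f ⁻¹' s ∈ x n} ∈ q
  exact mem_of_superset hs fun n hn => mem_of_superset (hB n) fun a ha =>
    show f a ∈ s by rw [hf n a ha]; exact hn

theorem exists_mem_compl_and_infinite {T : Set (Ultrafilter α)} (hT : T.Infinite) :
    ∃ v ∈ T, ∃ C : Set α, Cᶜ ∈ v ∧ {w ∈ T | C ∈ w}.Infinite := by
  obtain ⟨a, ha, b, hb, hab⟩ := hT.nontrivial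
  obtain ⟨B, hBa, hBb⟩ : ∃ B ∈ a, B ∉ b := by
    by_contra! h
    exact hab (coe_le_coe.1 h).symm
  by_cases hB : {w ∈ T | B ∈ w}.Infinite
  · exact ⟨b, hb, B, compl_mem_iff_notMem.2 hBb, hB⟩
  · refine ⟨a, ha, Bᶜ, by rwa [compl_compl], (hT.sdiff (not_infinite.1 hB)).mono ?_⟩
    exact fun w hw => ⟨hw.1, compl_mem_iff_notMem.2 fun h => hw.2 ⟨hw.1, h⟩⟩

theorem exists_seq_pairwise_disjoint {M : Set (Ultrafilter α)} (hM : M.Infinite) :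
    ∃ (u : ℕ → Ultrafilter α) (A : ℕ → Set α),
      (∀ k, u k ∈ M) ∧ (∀ k, A k ∈ u k) ∧ Pairwise (Disjoint on A) := by
  choose v hvT C hCv hinf using
    fun T : {T : Set (Ultrafilter α) // T.Infinite} => exists_mem_compl_and_infinite T.2
  let T : ℕ → {T : Set (Ultrafilter α) // T.Infinite} :=
    fun k => Nat.rec ⟨M, hM⟩ (fun _ T => ⟨_, hinf T⟩) k
  have hT : Antitone fun k => (T k).1 := by
    refine antitone_nat_of_succ_le fun k => ?_
    exact sep_subset _ _
  have hC : ∀ j k, j < k → C (T j) ∈ v (T k) := fun j k hjk =>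
    (hT (Nat.succ_le_of_lt hjk) (hvT (T k))).2
  refine ⟨fun k => v (T k), fun k => (C (T k))ᶜ ∩ ⋂ j ∈ Finset.range k, C (T j),
    fun k => hT (Nat.zero_le k) (hvT (T k)),
    fun k => inter_mem (hCv _)
      ((biInter_finset_mem _).2 fun j hj => hC j k (Finset.mem_range.1 hj)),
    (pairwise_disjoint_on _).2 fun j k hjk => ?_⟩
  exact disjoint_compl_left.mono inter_subset_left
    (inter_subset_right.trans (biInter_subset_of_mem (Finset.mem_range.2 hjk)))

theorem exists_infinite_pairwiseDisjoint {M : Set (Ultrafilter α)} (hM : M.Infinite) :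
    ∃ L ⊆ M, L.Infinite ∧
      ∃ A : Ultrafilter α → Set α, (∀ u ∈ L, A u ∈ u) ∧ L.PairwiseDisjoint A := by
  obtain ⟨u, A, huM, hAu, hA⟩ := exists_seq_pairwise_disjoint hM
  have hu : Injective u := fun j k hjk => by
    by_contra hne
    have h := inter_mem (hAu j) (hjk ▸ hAu k)
    rw [(hA hne).inter_eq] at h
    exact empty_notMem h
  refine ⟨range u, range_subset_iff.2 huM, infinite_range_of_injective hu, A ∘ invFun u, ?_, ?_⟩
  · rintro _ ⟨k, rfl⟩
    simpa [leftInverse_invFun hu k] using hAu k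
  · rintro _ ⟨j, rfl⟩ _ ⟨k, rfl⟩ hne
    simpa [onFun, leftInverse_invFun hu _] using hA (ne_of_apply_ne u hne)

theorem mk_set_le_of_independent {ι β : Type u} (A : ι → Set β)
    (hA : ∀ (s : Finset ι) (H : Set ι), (⋂ i ∈ s, {b | b ∈ A i ↔ i ∈ H}).Nonempty) :
    #(Set ι) ≤ #(Ultrafilter β) := by
  have hne : ∀ H : Set ι, NeBot (⨅ i, 𝓟 {b | b ∈ A i ↔ i ∈ H}) := fun H => by
    rw [neBot_iff, Ne, ← empty_mem_iff_bot, mem_iInf_finite]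
    rintro ⟨s, hs⟩
    rw [iInf_principal_finset, mem_principal, subset_empty_iff] at hs
    exact (hA s H).ne_empty hs
  let U : Set ι → Ultrafilter β := fun H => @Ultrafilter.of _ _ (hne H)
  have hU : ∀ H i, {b | b ∈ A i ↔ i ∈ H} ∈ U H := fun H i =>
    @of_le _ _ (hne H) _ (mem_iInf_of_mem i (mem_principal_self _))
  refine mk_le_of_injective (f := U) fun H H' hHH' => Set.ext fun i => ?_
  obtain ⟨b, hb, hb'⟩ := nonempty_of_mem (inter_mem (hU H i) (hHH' ▸ hU H' i))
  exact hb.symm.trans hb'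

end Ultrafilter

def truncation (n : ℕ) (f : ℕ → Bool) : Finset ℕ := (Finset.range n).filter fun k => f k

theorem eventually_injOn_truncation (s : Finset (ℕ → Bool)) :
    ∀ᶠ n in atTop, InjOn (truncation n) s := by
  have hpair : ∀ f g : ℕ → Bool, ∀ᶠ n in atTop, truncation n f = truncation n g → f = g := by
    intro f g
    by_cases hfg : f = g
    · exact Eventually.of_forall fun _ _ => hfg
    obtain ⟨k, hk⟩ := ne_iff.1 hfg
    filter_upwards [eventually_gt_atTop k] with n hn heq
    have := congrArg (k ∈ ·) heq
    simp only [truncation, Finset.mem_filter, Finset.mem_range, hn, true_and, eq_iff_iff] at this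
    exact absurd (Bool.eq_iff_iff.2 this) hk
  filter_upwards [(eventually_all_finset s).2 fun f _ => (eventually_all_finset s).2 fun g _ =>
    hpair f g] with n hn f hf g hg
  exact hn f hf g hg

/-- An independent family of size `𝔠` on the pairs `(n, 𝒜)`, `𝒜` a finite family of finite
sets, coded by natural numbers: `f` selects the pairs for which `𝒜` contains `f` truncated
at `n`. -/
def truncationFamily (f : ℕ → Bool) : Set ℕ :=
  {m | truncation ((Denumerable.eqv _).symm m : ℕ × Finset (Finset ℕ)).1 f ∈
    ((Denumerable.eqv _).symm m : ℕ × Finset (Finset ℕ)).2}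

theorem truncationFamily_independent (s : Finset (ℕ → Bool)) (H : Set (ℕ → Bool)) :
    (⋂ f ∈ s, {m | m ∈ truncationFamily f ↔ f ∈ H}).Nonempty := by
  classical
  obtain ⟨n, hn⟩ := (eventually_injOn_truncation s).exists
  refine ⟨Denumerable.eqv _ (n, (s.filter (· ∈ H)).image (truncation n)),
    mem_iInter₂.2 fun f hf => ?_⟩
  change _ ∈ truncationFamily f ↔ f ∈ H
  rw [truncationFamily, mem_ofPred_eq, Equiv.symm_apply_apply]
  simp only [Finset.mem_image, Finset.mem_filter]
  exact ⟨fun ⟨g, ⟨hg, hgH⟩, hgf⟩ => hn hg hf hgf ▸ hgH, fun hfH => ⟨f, ⟨hf, hfH⟩, rfl⟩⟩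

theorem continuum_lt_mk_ultrafilter_nat : 𝔠 < #(Ultrafilter ℕ) :=
  calc 𝔠 < 2 ^ 𝔠 := cantor 𝔠
    _ = #(Set (ℕ → Bool)) := by rw [mk_set, ← power_def, mk_bool, mk_nat, two_power_aleph0]
    _ ≤ #(Ultrafilter ℕ) := Ultrafilter.mk_set_le_of_independent _ truncationFamily_independent

theorem exists_freeUF_notMem {D : Set (Ultrafilter ℕ)} (hD : #D ≤ 𝔠) :
    ∃ q, FreeUF q ∧ q ∉ D := by
  by_contra! h
  have hcover : (univ : Set (Ultrafilter ℕ)) ⊆ D ∪ range pure := fun q _ => by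
    by_cases hq : FreeUF q
    · exact Or.inl (h q hq)
    · simp only [FreeUF, not_forall, not_not] at hq
      obtain ⟨n, hn⟩ := hq
      exact Or.inr
        ⟨n, (Ultrafilter.coe_le_coe.1 (by rwa [Ultrafilter.coe_pure, le_pure_iff])).symm⟩
  refine continuum_lt_mk_ultrafilter_nat.not_ge ?_
  calc #(Ultrafilter ℕ) = #(univ : Set (Ultrafilter ℕ)) := mk_univ.symm
    _ ≤ #D + #(range (pure : ℕ → Ultrafilter ℕ)) :=
      (mk_le_mk_of_subset hcover).trans (mk_union_le _ _)
    _ ≤ 𝔠 + ℵ₀ := add_le_add hD (mk_range_le.trans mk_nat.le)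
    _ = 𝔠 := continuum_add_aleph0

theorem mk_setOf_rKle_le {S : Set (Ultrafilter ℕ)} (hS : #S ≤ 𝔠) :
    #{u | ∃ v ∈ S, RKle u v} ≤ 𝔠 := by
  have hsub : {u | ∃ v ∈ S, RKle u v} ⊆
      range fun vf : S × (ℕ → ℕ) => (vf.1 : Ultrafilter ℕ).map vf.2 := by
    rintro u ⟨v, hv, f, rfl⟩
    exact ⟨(⟨v, hv⟩, f), rfl⟩
  calc _ ≤ #(S × (ℕ → ℕ)) := (mk_le_mk_of_subset hsub).trans mk_range_le
    _ ≤ 𝔠 * 𝔠 := by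
      rw [mk_prod, lift_id, lift_id, ← power_def, mk_nat, aleph0_power_aleph0]
      exact mul_le_mul_left hS 𝔠
    _ = 𝔠 := continuum_mul_self

theorem seqPCompact_of_rKle_mem {q : Ultrafilter ℕ} {Y : Set (Ultrafilter ℕ)}
    (hY : ∀ v, RKle q v → v ∈ Y) : SeqPCompact q Y := by
  intro M hM
  obtain ⟨L, hLM, hL, A, hAL, hA⟩ :=
    Ultrafilter.exists_infinite_pairwiseDisjoint (hM.image Subtype.val_injective.injOn)
  refine ⟨{y ∈ M | (y : Ultrafilter ℕ) ∈ L}, sep_subset _ _, ?_, fun x hx hxL => ?_⟩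
  · refine Infinite.of_image Subtype.val (hL.mono fun u hu => ?_)
    obtain ⟨y, hy, rfl⟩ := hLM hu
    exact ⟨y, ⟨hy, hu⟩, rfl⟩
  · obtain ⟨f, hf⟩ := Ultrafilter.exists_map_bind_eq q (B := fun n => A (x n))
      (fun n => hAL _ (hxL n).2)
      fun m n hmn => hA (hxL m).2 (hxL n).2 (Subtype.val_injective.ne (hx.ne hmn))
    exact ⟨⟨_, hY _ ⟨f, hf⟩⟩, tendsto_subtype_rng.2 (Ultrafilter.tendsto_bind q _)⟩

/-- Well-founded trees with countable branching at inner nodes and leaves labelled by `ℕ`: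
`none` is an inner node, `some n` a leaf. -/
abbrev LimitTree : Type := WType fun o : Option ℕ => o.elim ℕ fun _ => Empty

namespace LimitTree

def eval (p : Ultrafilter ℕ) : LimitTree → Ultrafilter ℕ :=
  WType.elim _ fun
    | ⟨none, t⟩ => p.bind t
    | ⟨some n, _⟩ => pure n

theorem mk_le_continuum : #LimitTree ≤ 𝔠 := by
  refine WType.cardinalMk_le_of_le ((sum_le_sum _ (fun _ => 𝔠) fun o => ?_).trans ?_)
  · calc _ ≤ 𝔠 ^ ℵ₀ := power_le_power_left continuum_ne_zero (by cases o <;> simp)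
      _ = 𝔠 := continuum_power_aleph0
  · rw [sum_const']
    exact (mul_le_mul_left mk_le_aleph0 𝔠).trans aleph0_mul_continuum.le

theorem pure_mem_range_eval (p : Ultrafilter ℕ) (n : ℕ) : pure n ∈ range (eval p) :=
  ⟨WType.mk (some n) Empty.elim, rfl⟩

theorem pCompact_range_eval (p : Ultrafilter ℕ) : PCompact p (range (eval p)) := by
  intro x
  choose t ht using fun n => (x n).2
  refine ⟨⟨p.bind fun n => x n, WType.mk none t, ?_⟩,
    tendsto_subtype_rng.2 (Ultrafilter.tendsto_bind p _)⟩
  exact congrArg p.bind (funext ht)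

end LimitTree

/-- There are free ultrafilters `p, q` and subspaces `X, Y` of βℕ such that `X`
is `p`-compact, `Y` is sequentially `q`-compact, and `X × Y` is not pseudocompact. -/
theorem stmt_14 :
    ∃ (p q : Ultrafilter ℕ) (X Y : Set (StoneCech ℕ)),
      FreeUF p ∧ FreeUF q ∧
      PCompact p ↥X ∧ SeqPCompact q ↥Y ∧
      ¬ Pseudocompact (↥X × ↥Y) := by
  let p : Ultrafilter ℕ := hyperfilter ℕ
  let X := range (LimitTree.eval p)
  obtain ⟨q, hq, hqX⟩ := exists_freeUF_notMem (mk_setOf_rKle_le (S := X)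
    (mk_range_le.trans LimitTree.mk_le_continuum))
  let Y := range pure ∪ Xᶜ
  have hXY : X ∩ Y = range pure := by
    rw [inter_union_distrib_left, inter_compl_self, union_empty,
      inter_eq_right.2 (range_subset_iff.2 (LimitTree.pure_mem_range_eval p))]
  let e := ultrafilterHomeomorphStoneCech ℕ
  refine ⟨p, q, e '' X, e '' Y, fun n => notMem_hyperfilter_of_finite (finite_singleton n), hq,
    (LimitTree.pCompact_range_eval p).of_surjective (e.image X).continuous (e.image X).surjective,
    (seqPCompact_of_rKle_mem fun v hv => ?_).of_homeomorph (e.image Y), fun h => ?_⟩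
  · exact Or.inr fun hvX => hqX ⟨v, hvX, hv⟩
  · let eXY := (e.image X).prodCongr (e.image Y)
    refine not_pseudocompact_prod_of_infinite_inter
      (hXY ▸ infinite_range_of_injective Ultrafilter.pure_injective) (fun a ha => ?_)
      (h.of_surjective eXY.symm.continuous eXY.symm.surjective)
    obtain ⟨n, rfl⟩ := hXY ▸ ha
    exact Ultrafilter.isOpen_singleton_pure n
end

section
/- Let X be an extremally disconnected (completely regular Hausdorff) space, U, V ⊆ X nonempty disjoint open sets, and f : U → V a homeomorphism. Then there exists a self-homeomorphism F of βX such that F restricted to U equals f, F restricted to V equals f⁻¹, and F is the identity on βX \ (closure(U) ∪ closure(V)) (closures in βX). -/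
open Set Filter Topology Function

/-!
In an extremally disconnected space disjoint open sets have disjoint closures. Hence a map `ψ`
into a compact Hausdorff space that is continuous on an open set `W` has a single cluster value
along `𝓝[W] x` at each `x ∈ closure W`, and so extends continuously to the clopen set
`closure W`. Applied to `stoneCechUnit ∘ σ`, where `σ` swaps `U` and `V` along `f`, this gives
`g : X → βX`, equal to `stoneCechUnit ∘ σ` on `W = U ∪ V` and to `stoneCechUnit` off
`closure W`. Its extension `H : βX → βX` satisfies `H ∘ g = stoneCechUnit` on the dense set
`W ∪ (closure W)ᶜ`, hence everywhere; so `H ∘ H = id` and `H` is the required homeomorphism.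
-/

section ExtremallyDisconnected

variable {X K : Type*} [TopologicalSpace X] [ExtremallyDisconnected X]
  [TopologicalSpace K] [CompactSpace K] [T2Space K]

theorem ExtremallyDisconnected.exists_tendsto_nhdsWithin {U : Set X} (hU : IsOpen U)
    {ψ : X → K} (hψ : ContinuousOn ψ U) {x : X} (hx : x ∈ closure U) :
    ∃ y, Tendsto ψ (𝓝[U] x) (𝓝 y) := by
  have := mem_closure_iff_nhdsWithin_neBot.mp hx
  obtain ⟨a, ha⟩ := exists_clusterPt_of_compactSpace (map ψ (𝓝[U] x))
  refine ⟨a, tendsto_nhds_of_unique_mapClusterPt fun b hb => ?_⟩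
  by_contra hba
  obtain ⟨Wb, Wa, hWb, hWa, hbW, haW, hW⟩ := t2_separation hba
  have mem_closure_preimage : ∀ c W, MapClusterPt c (𝓝[U] x) ψ → IsOpen W → c ∈ W →
      x ∈ closure (U ∩ ψ ⁻¹' W) := by
    intro c W hc hW hcW
    exact mem_closure_iff_frequently.mpr <|
      (frequently_nhdsWithin_iff.mp (hc.frequently (hW.mem_nhds hcW))).mono fun _ h => ⟨h.2, h.1⟩
  have hdisj : Disjoint (U ∩ ψ ⁻¹' Wb) (U ∩ ψ ⁻¹' Wa) :=
    (hW.preimage ψ).mono inter_subset_right inter_subset_right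
  exact (disjoint_closure_of_disjoint_isOpen hdisj (hψ.isOpen_inter_preimage hU hWb)
    (hψ.isOpen_inter_preimage hU hWa)).ne_of_mem (mem_closure_preimage b Wb hb hWb hbW)
    (mem_closure_preimage a Wa ha hWa haW) rfl

theorem ExtremallyDisconnected.exists_continuous_extension {U : Set X} (hU : IsOpen U)
    {ψ d : X → K} (hψ : ContinuousOn ψ U) (hd : Continuous d) :
    ∃ g : X → K, Continuous g ∧ EqOn g ψ U ∧ EqOn g d (closure U)ᶜ := by
  classical
  have hclopen : IsClopen (closure U) := ⟨isClosed_closure, open_closure U hU⟩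
  refine ⟨(closure U).piecewise (extendFrom U ψ) d, continuous_piecewise ?_ ?_ hd.continuousOn,
    fun x hx => ?_, fun x hx => piecewise_eq_of_notMem _ _ _ hx⟩
  · simp [hclopen.frontier_eq]
  · rw [closure_closure]
    exact continuousOn_extendFrom subset_rfl fun x hx => exists_tendsto_nhdsWithin hU hψ hx
  · rw [piecewise_eq_of_mem _ _ _ (subset_closure hx)]
    exact extendFrom_extends hψ x hx

end ExtremallyDisconnected

theorem ExtremallyDisconnected.exists_homeomorph_stoneCech_extending_involution {X : Type*}
    [TopologicalSpace X] [ExtremallyDisconnected X] {W : Set X} (hW : IsOpen W) {σ : X → X}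
    (hσ : ContinuousOn σ W) (hσW : MapsTo σ W W) (hσσ : LeftInvOn σ σ W) :
    ∃ F : StoneCech X ≃ₜ StoneCech X, (∀ x ∈ W, F (stoneCechUnit x) = stoneCechUnit (σ x)) ∧
      ∀ z ∉ closure (stoneCechUnit '' W), F z = z := by
  obtain ⟨g, hg, hgW, hg_out⟩ := exists_continuous_extension hW
    (continuous_stoneCechUnit.comp_continuousOn hσ) continuous_stoneCechUnit
  set H := stoneCechExtend hg
  have hHc : Continuous H := continuous_stoneCechExtend hg
  have hH : ∀ x, H (stoneCechUnit x) = g x := stoneCechExtend_stoneCechUnit hg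
  have hg_out' : ∀ x ∉ closure W, H (stoneCechUnit x) = stoneCechUnit x := fun x hx =>
    (hH x).trans (hg_out hx)
  have hHg : ∀ x, H (g x) = stoneCechUnit x := by
    have hdense : closure (W ∪ (closure W)ᶜ) = univ := by
      refine eq_univ_of_univ_subset fun x _ => ?_
      rw [closure_union]
      by_cases hx : x ∈ closure W
      exacts [Or.inl hx, Or.inr (subset_closure hx)]
    have hEq : EqOn (H ∘ g) stoneCechUnit (W ∪ (closure W)ᶜ) := by
      rintro x (hx | hx)
      · simp only [comp_apply, hgW hx, hH, hgW (hσW hx), hσσ hx]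
      · simp only [comp_apply, hg_out hx, hg_out' x hx]
    intro x
    exact hEq.closure (hHc.comp hg) continuous_stoneCechUnit (hdense ▸ mem_univ x)
  have hinv : Involutive H := congrFun <|
    stoneCech_hom_ext (hHc.comp hHc) continuous_id (funext fun x => by simp [hH, hHg])
  refine ⟨⟨hinv.toPerm H, hHc, hHc⟩, fun x hx => (hH x).trans (hgW hx), fun z hz => ?_⟩
  have hfix : EqOn H id ((closure (stoneCechUnit '' W))ᶜ ∩ range stoneCechUnit) := by
    rintro _ ⟨hxW, x, rfl⟩
    exact hg_out' x fun hx => hxW (map_mem_closure continuous_stoneCechUnit hx (mapsTo_image _ _))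
  exact hfix.of_subset_closure hHc.continuousOn continuousOn_id inter_subset_left
    (denseRange_stoneCechUnit.open_subset_closure_inter isClosed_closure.isOpen_compl) hz

namespace Homeomorph

variable {X : Type*} [TopologicalSpace X] {U V : Set X}

open scoped Classical in
noncomputable def swapOn (f : U ≃ₜ V) (x : X) : X :=
  if h : x ∈ U then f ⟨x, h⟩ else if h : x ∈ V then f.symm ⟨x, h⟩ else x

variable (f : U ≃ₜ V)

theorem swapOn_of_mem_left {x : X} (hx : x ∈ U) : f.swapOn x = f ⟨x, hx⟩ := dif_pos hx

theorem swapOn_of_mem_right (hUV : Disjoint U V) {x : X} (hx : x ∈ V) :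
    f.swapOn x = f.symm ⟨x, hx⟩ :=
  (dif_neg (hUV.notMem_of_mem_right hx)).trans (dif_pos hx)

theorem mapsTo_swapOn (hUV : Disjoint U V) : MapsTo f.swapOn (U ∪ V) (U ∪ V) := by
  rintro x (hx | hx)
  · exact Or.inr (f.swapOn_of_mem_left hx ▸ (f ⟨x, hx⟩).2)
  · exact Or.inl (f.swapOn_of_mem_right hUV hx ▸ (f.symm ⟨x, hx⟩).2)

theorem leftInvOn_swapOn (hUV : Disjoint U V) : LeftInvOn f.swapOn f.swapOn (U ∪ V) := by
  rintro x (hx | hx)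
  · rw [f.swapOn_of_mem_left hx, f.swapOn_of_mem_right hUV (f ⟨x, hx⟩).2]
    simp
  · rw [f.swapOn_of_mem_right hUV hx, f.swapOn_of_mem_left (f.symm ⟨x, hx⟩).2]
    simp

theorem continuousOn_swapOn (hUV : Disjoint U V) (hU : IsOpen U) (hV : IsOpen V) :
    ContinuousOn f.swapOn (U ∪ V) := by
  refine ContinuousOn.union_of_isOpen ?_ ?_ hU hV <;> rw [continuousOn_iff_continuous_domRestrict]
  · convert continuous_subtype_val.comp f.continuous using 1
    exact funext fun x => f.swapOn_of_mem_left x.2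
  · convert continuous_subtype_val.comp f.symm.continuous using 1
    exact funext fun x => f.swapOn_of_mem_right hUV x.2

end Homeomorph

theorem stmt_15_general {X : Type*} [TopologicalSpace X]
    [ExtremallyDisconnected X]
    (U V : Set X) (hU : IsOpen U) (hV : IsOpen V)
    (hdisj : U ∩ V = ∅) (f : ↥U ≃ₜ ↥V) :
    ∃ F : StoneCech X ≃ₜ StoneCech X,
      (∀ u : ↥U, F (stoneCechUnit (u : X)) = stoneCechUnit ((f u : X))) ∧
      (∀ v : ↥V, F (stoneCechUnit (v : X)) = stoneCechUnit ((f.symm v : X))) ∧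
      (∀ z : StoneCech X,
        z ∉ closure (stoneCechUnit '' U) ∪ closure (stoneCechUnit '' V) → F z = z) := by
  have hUV : Disjoint U V := disjoint_iff_inter_eq_empty.mpr hdisj
  obtain ⟨F, hF, hF_fix⟩ := ExtremallyDisconnected.exists_homeomorph_stoneCech_extending_involution
    (hU.union hV) (f.continuousOn_swapOn hUV hU hV) (f.mapsTo_swapOn hUV) (f.leftInvOn_swapOn hUV)
  refine ⟨F, fun u => ?_, fun v => ?_, fun z hz => hF_fix z ?_⟩
  · rw [hF u (Or.inl u.2), f.swapOn_of_mem_left u.2]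
  · rw [hF v (Or.inr v.2), f.swapOn_of_mem_right hUV v.2]
  · rwa [image_union, closure_union]

/-- In an extremally disconnected completely regular Hausdorff space, a
homeomorphism between disjoint open sets `U` and `V` extends to a self-homeomorphism of βX
which swaps `U` and `V` and is the identity off `cl U ∪ cl V` (closures in βX). -/
theorem stmt_15 {X : Type*} [TopologicalSpace X] [T2Space X] [CompletelyRegularSpace X]
    [ExtremallyDisconnected X]
    (U V : Set X) (hU : IsOpen U) (hV : IsOpen V) (hUne : U.Nonempty) (hVne : V.Nonempty)
    (hdisj : U ∩ V = ∅) (f : ↥U ≃ₜ ↥V) :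
    ∃ F : StoneCech X ≃ₜ StoneCech X,
      (∀ u : ↥U, F (stoneCechUnit (u : X)) = stoneCechUnit ((f u : X))) ∧
      (∀ v : ↥V, F (stoneCechUnit (v : X)) = stoneCechUnit ((f.symm v : X))) ∧
      (∀ z : StoneCech X,
        z ∉ closure (stoneCechUnit '' U) ∪ closure (stoneCechUnit '' V) → F z = z) :=
  stmt_15_general U V hU hV hdisj f
end

section
/- Let X be a maximally homogeneous extremally disconnected space. If ζ and ρ are injective sequences in X with discrete range, then u(ζ) = u(ρ); that is, the set of free ultrafilters p for which a p-limit exists in X is the same for all injective discrete sequences on X. -/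
open Set Filter Topology Function

/-- A maximally homogeneous space: homogeneous and every self-homeomorphism of βX maps
(points of) X into X. -/
def MaximallyHomogeneous (X : Type*) [TopologicalSpace X] : Prop :=
  Homogeneous X ∧ ∀ (g : StoneCech X ≃ₜ StoneCech X) (x : X),
    ∃ y : X, g (stoneCechUnit x) = stoneCechUnit y

/-!
If `ζ` has a `p`-limit, pick a nonempty clopen set `E` missed `p`-almost everywhere by both `ζ`
and `ρ`, and a sequence `τ` inside `E`. Around `ζ`, `τ` and `ρ` there are pairwise disjoint open
tubes, those of `τ` inside `E` and the others (off a `p`-large set of indices) outside `E`. Using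
homogeneity on each tube, one builds an involution of `X` swapping the tubes of `ζ` with those of
`τ`; it is continuous on a dense open set, so in the extremally disconnected space `X` it
extends to a self-homeomorphism of `βX` sending `ζ n` to `τ n`. Likewise from `τ` to `ρ`.
Maximal homogeneity sends the `p`-limit of `ζ` in `βX` back into `X`, and since `X` embeds in
`βX` this point is a `p`-limit of `ρ`.
-/

section

variable {X : Type*} [TopologicalSpace X]

theorem ExtremallyDisconnected.exists_isClopen_mem_subset [RegularSpace X]
    [ExtremallyDisconnected X] {x : X} {O : Set X} (hO : O ∈ 𝓝 x) :
    ∃ C : Set X, IsClopen C ∧ x ∈ C ∧ C ⊆ O := by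
  obtain ⟨N, hN, hNc, hNO⟩ := exists_mem_nhds_isClosed_subset hO
  exact ⟨closure (interior N),
    ⟨isClosed_closure, ExtremallyDisconnected.open_closure _ isOpen_interior⟩,
    subset_closure (mem_interior_iff_mem_nhds.2 hN),
    (closure_minimal interior_subset hNc).trans hNO⟩

theorem ExtremallyDisconnected.exists_tendsto_nhdsWithin_s16 [ExtremallyDisconnected X]
    {K : Type*} [TopologicalSpace K] [CompactSpace K] [T2Space K] {V : Set X} (hV : IsOpen V)
    {f : X → K} (hf : ContinuousOn f V) {x : X} (hx : x ∈ closure V) :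
    ∃ c, Tendsto f (𝓝[V] x) (𝓝 c) := by
  have : NeBot (𝓝[V] x) := mem_closure_iff_nhdsWithin_neBot.mp hx
  obtain ⟨c, hc⟩ := exists_clusterPt_of_compactSpace (map f (𝓝[V] x))
  refine ⟨c, tendsto_nhds_of_unique_mapClusterPt fun c' hc' => ?_⟩
  by_contra hne
  obtain ⟨W, W', hW, hW', hc'W, hcW', hWW'⟩ := t2_separation hne
  have mem_closure : ∀ {d : K} {N : Set K}, MapClusterPt d (𝓝[V] x) f → IsOpen N → d ∈ N →
      x ∈ closure (V ∩ f ⁻¹' N) := fun hd hN hdN =>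
    mem_closure_iff_frequently.2 <| (frequently_nhdsWithin_iff.1 (hd.frequently
      (hN.mem_nhds hdN))).mono fun _ hz => ⟨hz.2, hz.1⟩
  -- two cluster points put `x` in the closures of two disjoint open subsets of `V`
  exact disjoint_left.1 (ExtremallyDisconnected.disjoint_closure_of_disjoint_isOpen
      ((hWW'.preimage f).mono inter_subset_right inter_subset_right)
      (hf.isOpen_inter_preimage hV hW) (hf.isOpen_inter_preimage hV hW'))
    (mem_closure hc' hW hc'W) (mem_closure hc hW' hcW')

theorem ExtremallyDisconnected.continuousOn_extendFrom [ExtremallyDisconnected X]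
    {K : Type*} [TopologicalSpace K] [CompactSpace K] [T2Space K] {V : Set X} (hV : IsOpen V)
    {f : X → K} (hf : ContinuousOn f V) : ContinuousOn (extendFrom V f) (closure V) :=
  _root_.continuousOn_extendFrom subset_rfl fun _ hx =>
    ExtremallyDisconnected.exists_tendsto_nhdsWithin_s16 hV hf hx

theorem exists_homeomorph_stoneCech_of_involutive [ExtremallyDisconnected X] {σ : X → X}
    (hσ : Involutive σ) {D : Set X} (hD : IsOpen D) (hDd : Dense D) (hσD : MapsTo σ D D)
    (hσc : ContinuousOn σ D) :
    ∃ g : StoneCech X ≃ₜ StoneCech X, ∀ x ∈ D, g (stoneCechUnit x) = stoneCechUnit (σ x) := by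
  have hf : ContinuousOn (stoneCechUnit ∘ σ) D := continuous_stoneCechUnit.comp_continuousOn hσc
  have hΦ : Continuous (extendFrom D (stoneCechUnit ∘ σ)) := by
    rw [← continuousOn_univ, ← hDd.closure_eq]
    exact ExtremallyDisconnected.continuousOn_extendFrom hD hf
  set g := stoneCechExtend hΦ
  have hgc : Continuous g := continuous_stoneCechExtend hΦ
  have hg : ∀ x ∈ D, g (stoneCechUnit x) = stoneCechUnit (σ x) := fun x hx =>
    (stoneCechExtend_stoneCechUnit hΦ x).trans (extendFrom_extends hf x hx)
  have hgg : Involutive g := congrFun <| Continuous.ext_on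
    (denseRange_stoneCechUnit.dense_image continuous_stoneCechUnit hDd) (hgc.comp hgc)
    continuous_id <| by
      rintro _ ⟨x, hx, rfl⟩
      simp only [hg x hx, hg (σ x) (hσD hx), hσ x]
  exact ⟨⟨hgg.toPerm g, hgc, hgc⟩, hg⟩

section SwapTubes

variable {ι : Type*} {U : ι → Set X} {h : ι → X ≃ₜ X}

noncomputable def swapTubes (U : ι → Set X) (h : ι → X ≃ₜ X) (x : X) : X :=
  open scoped Classical in
  if hx : ∃ i, x ∈ U i then h hx.choose x
  else if hx : ∃ i, x ∈ h i '' U i then (h hx.choose).symm x else x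

theorem swapTubes_of_mem (hUd : Pairwise (Disjoint on U)) {i : ι} {x : X} (hx : x ∈ U i) :
    swapTubes U h x = h i x := by
  have hex : ∃ j, x ∈ U j := ⟨i, hx⟩
  rw [swapTubes, dif_pos hex, hUd.eq (not_disjoint_iff.2 ⟨x, hex.choose_spec, hx⟩)]

theorem swapTubes_of_mem_image (hTd : Pairwise (Disjoint on fun i => h i '' U i))
    (hUT : Disjoint (⋃ i, U i) (⋃ i, h i '' U i)) {i : ι} {x : X} (hx : x ∈ h i '' U i) :
    swapTubes U h x = (h i).symm x := by
  have hU : ¬∃ j, x ∈ U j := fun ⟨j, hj⟩ =>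
    disjoint_left.1 hUT (mem_iUnion_of_mem j hj) (mem_iUnion_of_mem i hx)
  have hex : ∃ j, x ∈ h j '' U j := ⟨i, hx⟩
  rw [swapTubes, dif_neg hU, dif_pos hex,
    hTd.eq (not_disjoint_iff.2 ⟨x, hex.choose_spec, hx⟩)]

theorem swapTubes_of_notMem {x : X} (hx : x ∉ (⋃ i, U i) ∪ ⋃ i, h i '' U i) :
    swapTubes U h x = x := by
  simp only [mem_union, mem_iUnion, not_or] at hx
  rw [swapTubes, dif_neg hx.1, dif_neg hx.2]

theorem exists_homeomorph_stoneCech_swapTubes [ExtremallyDisconnected X]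
    (hU : ∀ i, IsOpen (U i)) (hUd : Pairwise (Disjoint on U))
    (hTd : Pairwise (Disjoint on fun i => h i '' U i))
    (hUT : Disjoint (⋃ i, U i) (⋃ i, h i '' U i)) :
    ∃ g : StoneCech X ≃ₜ StoneCech X,
      ∀ i, ∀ x ∈ U i, g (stoneCechUnit x) = stoneCechUnit (h i x) := by
  set O := (⋃ i, U i) ∪ ⋃ i, h i '' U i
  have hT : ∀ i, IsOpen (h i '' U i) := fun i => (h i).isOpenMap _ (hU i)
  have hO : IsOpen O := (isOpen_iUnion hU).union (isOpen_iUnion hT)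
  have left : ∀ {i x}, x ∈ U i → swapTubes U h x = h i x := swapTubes_of_mem hUd
  have right : ∀ {i x}, x ∈ h i '' U i → swapTubes U h x = (h i).symm x :=
    swapTubes_of_mem_image hTd hUT
  have hσ : Involutive (swapTubes U h) := by
    intro x
    by_cases hx : x ∈ O
    · rcases hx with hx | hx <;> obtain ⟨i, hi⟩ := mem_iUnion.1 hx
      · rw [left hi, right (mem_image_of_mem _ hi), Homeomorph.symm_apply_apply]
      · obtain ⟨y, hy, rfl⟩ := hi
        rw [right ⟨y, hy, rfl⟩, Homeomorph.symm_apply_apply, left hy]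
    · rw [swapTubes_of_notMem hx, swapTubes_of_notMem hx]
  have hσD : MapsTo (swapTubes U h) (O ∪ (closure O)ᶜ) (O ∪ (closure O)ᶜ) := by
    rintro x ((hx | hx) | hx)
    · obtain ⟨i, hi⟩ := mem_iUnion.1 hx
      rw [left hi]
      exact Or.inl (Or.inr (mem_iUnion_of_mem i (mem_image_of_mem _ hi)))
    · obtain ⟨i, y, hy, rfl⟩ := mem_iUnion.1 hx
      rw [right ⟨y, hy, rfl⟩, Homeomorph.symm_apply_apply]
      exact Or.inl (Or.inl (mem_iUnion_of_mem i hy))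
    · rw [swapTubes_of_notMem fun h' => hx (subset_closure h')]
      exact Or.inr hx
  have hσc : ContinuousOn (swapTubes U h) (O ∪ (closure O)ᶜ) := by
    refine continuousOn_of_forall_continuousAt fun x hx => ?_
    rcases hx with (hx | hx) | hx
    · obtain ⟨i, hi⟩ := mem_iUnion.1 hx
      exact (h i).continuous.continuousAt.congr <|
        eventuallyEq_of_mem ((hU i).mem_nhds hi) fun _ hz => (left hz).symm
    · obtain ⟨i, hi⟩ := mem_iUnion.1 hx
      exact (h i).symm.continuous.continuousAt.congr <|
        eventuallyEq_of_mem ((hT i).mem_nhds hi) fun _ hz => (right hz).symm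
    · exact continuousAt_id.congr <| eventuallyEq_of_mem
        (isClosed_closure.isOpen_compl.mem_nhds hx) fun _ hz =>
          (swapTubes_of_notMem fun h' => hz (subset_closure h')).symm
  obtain ⟨g, hg⟩ := exists_homeomorph_stoneCech_of_involutive hσ
    (hO.union isClosed_closure.isOpen_compl)
    (coborder_eq_union_closure_compl (s := O) ▸ dense_coborder) hσD hσc
  exact ⟨g, fun i x hx => (hg x (Or.inl (Or.inl (mem_iUnion_of_mem i hx)))).trans
    (by rw [left hx])⟩

end SwapTubes

structure IsDisjointOpenNhds {ι : Type*} (α : ι → X) (U : ι → Set X) : Prop where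
  isOpen : ∀ i, IsOpen (U i)
  pairwise_disjoint : Pairwise (Disjoint on U)
  mem : ∀ i, α i ∈ U i

namespace IsDisjointOpenNhds

variable {ι κ : Type*} {α : ι → X} {U : ι → Set X}

theorem comp (hU : IsDisjointOpenNhds α U) {e : κ → ι} (he : Injective e) :
    IsDisjointOpenNhds (α ∘ e) (U ∘ e) :=
  ⟨fun k => hU.isOpen (e k), hU.pairwise_disjoint.comp_of_injective he, fun k => hU.mem (e k)⟩

theorem diff (hU : IsDisjointOpenNhds α U) {E : Set X} (hE : IsClosed E) (hα : ∀ i, α i ∉ E) :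
    IsDisjointOpenNhds α fun i => U i \ E :=
  ⟨fun i => (hU.isOpen i).sdiff hE,
    hU.pairwise_disjoint.mono fun _ _ hij => hij.mono sdiff_subset sdiff_subset,
    fun i => ⟨hU.mem i, hα i⟩⟩

end IsDisjointOpenNhds

theorem exists_isDisjointOpenNhds_of_discreteTopology [RegularSpace X] [ExtremallyDisconnected X]
    {α : ℕ → X} (hinj : Injective α) (hd : DiscreteTopology (range α)) :
    ∃ U : ℕ → Set X, IsDisjointOpenNhds α U := by
  choose O hO hOα using fun n => discreteTopology_subtype_iff'.1 hd (α n) (mem_range_self n)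
  choose C hC hαC hCO using fun n => ExtremallyDisconnected.exists_isClopen_mem_subset
    ((hO n).mem_nhds ((hOα n).symm.subset rfl).1)
  have hαC' : ∀ {m n}, α n ∈ C m → n = m := fun {m n} hmn =>
    hinj ((hOα m).subset ⟨hCO m hmn, mem_range_self n⟩)
  refine ⟨disjointed C, fun n => ?_, disjoint_disjointed C, fun n => ?_⟩ <;>
    rw [disjointed_eq_inter_compl]
  · exact ((hC n).inter ((finite_Iio n).isClopen_biInter fun j _ => (hC j).compl)).isOpen
  · exact ⟨hαC n, mem_iInter₂.2 fun j hj hn => (ne_of_lt hj).symm (hαC' hn)⟩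

theorem exists_isDisjointOpenNhds_subset [T2Space X] [PerfectSpace X] {E : Set X}
    (hE : IsOpen E) (hne : E.Nonempty) :
    ∃ (τ : ℕ → X) (T : ℕ → Set X), IsDisjointOpenNhds τ T ∧ ∀ n, T n ⊆ E := by
  obtain ⟨x, hx⟩ := hne
  have : Infinite E := (infinite_of_mem_nhds x (hE.mem_nhds hx)).to_subtype
  obtain ⟨V, hVinf, hVo, hVd⟩ := exists_seq_infinite_isOpen_pairwise_disjoint E
  choose τ hτ using fun n => (hVinf n).nonempty
  exact ⟨fun n => τ n, fun n => (↑) '' V n,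
    ⟨fun n => hE.isOpenMap_subtype_val _ (hVo n),
      hVd.mono fun _ _ hij => (disjoint_image_iff Subtype.val_injective).2 hij,
      fun n => mem_image_of_mem _ (hτ n)⟩,
    fun n => Subtype.coe_image_subset _ _⟩

theorem exists_isClopen_nonempty_subset_diff_singleton [RegularSpace X] [T1Space X]
    [ExtremallyDisconnected X] [PerfectSpace X] {W : Set X} (hW : IsOpen W) {x : X}
    (hx : x ∈ W) : ∃ E : Set X, IsClopen E ∧ E.Nonempty ∧ E ⊆ W \ {x} := by
  obtain ⟨y, hy⟩ := Filter.nonempty_of_mem (sdiff_mem_nhdsWithin_compl (hW.mem_nhds hx) {x})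
  obtain ⟨E, hE, hyE, hEW⟩ := ExtremallyDisconnected.exists_isClopen_mem_subset
    ((hW.sdiff isClosed_singleton).mem_nhds hy)
  exact ⟨E, hE, ⟨y, hyE⟩, hEW⟩

theorem exists_isClopen_nonempty_notMem_compl_mem [RegularSpace X] [T1Space X]
    [ExtremallyDisconnected X] [PerfectSpace X] (x : X) (𝒱 : Ultrafilter X) :
    ∃ E : Set X, IsClopen E ∧ E.Nonempty ∧ x ∉ E ∧ Eᶜ ∈ 𝒱 := by
  obtain ⟨E₁, hE₁, hE₁ne, hxE₁⟩ :=
    exists_isClopen_nonempty_subset_diff_singleton isOpen_univ (mem_univ x)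
  by_cases h𝒱 : E₁ᶜ ∈ 𝒱
  · exact ⟨E₁, hE₁, hE₁ne, fun hx => (hxE₁ hx).2 rfl, h𝒱⟩
  obtain ⟨E₂, hE₂, hE₂ne, hE₂E₁⟩ := exists_isClopen_nonempty_subset_diff_singleton
    hE₁.isClosed.isOpen_compl fun hx => (hxE₁ hx).2 rfl
  exact ⟨E₂, hE₂, hE₂ne, fun hx => (hE₂E₁ hx).2 rfl,
    mem_of_superset (Ultrafilter.compl_notMem_iff.1 h𝒱)
      (subset_compl_comm.1 fun _ hz => (hE₂E₁ hz).1)⟩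

theorem Homogeneous.exists_homeomorph_stoneCech [ExtremallyDisconnected X] (hX : Homogeneous X)
    {ι : Type*} {α β : ι → X} {U T : ι → Set X} (hU : IsDisjointOpenNhds α U)
    (hT : IsDisjointOpenNhds β T) (hUT : Disjoint (⋃ i, U i) (⋃ i, T i)) :
    ∃ g : StoneCech X ≃ₜ StoneCech X, ∀ i, g (stoneCechUnit (α i)) = stoneCechUnit (β i) := by
  choose h hh using fun i => hX (α i) (β i)
  have hU'T : ∀ i, h i '' (U i ∩ h i ⁻¹' T i) ⊆ T i := fun i =>
    image_subset_iff.2 inter_subset_right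
  obtain ⟨g, hg⟩ := exists_homeomorph_stoneCech_swapTubes (U := fun i => U i ∩ h i ⁻¹' T i)
    (fun i => (hU.isOpen i).inter ((hT.isOpen i).preimage (h i).continuous))
    (hU.pairwise_disjoint.mono fun _ _ hij => hij.mono inter_subset_left inter_subset_left)
    (hT.pairwise_disjoint.mono fun i j hij => hij.mono (hU'T i) (hU'T j))
    (hUT.mono (iUnion_mono fun _ => inter_subset_left) (iUnion_mono hU'T))
  refine ⟨g, fun i => ?_⟩
  rw [hg i (α i) ⟨hU.mem i, by simpa only [mem_preimage, hh] using hT.mem i⟩, hh]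

theorem tendsto_of_homeomorph_stoneCech [CompletelyRegularSpace X]
    (g : StoneCech X ≃ₜ StoneCech X) {ι : Type*} {α β : ι → X} {l : Filter ι}
    (hg : ∀ᶠ i in l, g (stoneCechUnit (α i)) = stoneCechUnit (β i)) {x y : X}
    (hα : Tendsto α l (𝓝 x)) (hy : g (stoneCechUnit x) = stoneCechUnit y) :
    Tendsto β l (𝓝 y) := by
  rw [isInducing_stoneCechUnit.tendsto_nhds_iff, ← hy]
  exact ((g.continuous.tendsto _).comp ((continuous_stoneCechUnit.tendsto x).comp hα)).congr' hg

theorem not_isOpen_singleton_of_plim {p : Ultrafilter ℕ} (hp : FreeUF p) {ζ : ℕ → X}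
    (hinj : Injective ζ) {x : X} (hx : PLim p ζ x) : ¬IsOpen ({x} : Set X) := fun hopen => by
  have hmem : ζ ⁻¹' {x} ∈ p := hx (hopen.mem_nhds rfl)
  obtain ⟨n, hn⟩ := Ultrafilter.nonempty_of_mem hmem
  exact hp n (mem_of_superset hmem fun m hm => hinj (hm.trans hn.symm))

theorem Homogeneous.perfectSpace (hX : Homogeneous X) {x : X} (hx : ¬IsOpen ({x} : Set X)) :
    PerfectSpace X :=
  perfectSpace_iff_forall_not_isolated.2 fun y => neBot_iff.2 fun hy => by
    obtain ⟨h, rfl⟩ := hX y x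
    exact hx (by simpa using h.isOpenMap _ ((isOpen_singleton_iff_punctured_nhds y).2 hy))

theorem MaximallyHomogeneous.exists_plim [T2Space X] [CompletelyRegularSpace X]
    [ExtremallyDisconnected X] (hX : MaximallyHomogeneous X) {ζ ρ : ℕ → X}
    (hζinj : Injective ζ) (hζd : DiscreteTopology (range ζ))
    (hρinj : Injective ρ) (hρd : DiscreteTopology (range ρ))
    {p : Ultrafilter ℕ} (hp : FreeUF p) {x : X} (hx : PLim p ζ x) : ∃ y, PLim p ρ y := by
  have : PerfectSpace X := hX.1.perfectSpace (not_isOpen_singleton_of_plim hp hζinj hx)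
  obtain ⟨E, hE, hEne, hxE, hρE⟩ := exists_isClopen_nonempty_notMem_compl_mem x (p.map ρ)
  set A : Set ℕ := {n | ζ n ∉ E ∧ ρ n ∉ E}
  have hA : A ∈ p := inter_mem (hx (hE.isClosed.isOpen_compl.mem_nhds hxE)) hρE
  obtain ⟨τ, T, hT, hTE⟩ := exists_isDisjointOpenNhds_subset hE.isOpen hEne
  obtain ⟨Uζ, hUζ⟩ := exists_isDisjointOpenNhds_of_discreteTopology hζinj hζd
  obtain ⟨Uρ, hUρ⟩ := exists_isDisjointOpenNhds_of_discreteTopology hρinj hρd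
  have hsep : ∀ V : ℕ → Set X, Disjoint (⋃ n : A, V n \ E) (⋃ n : A, T n) := fun V =>
    disjoint_compl_left.mono (iUnion_subset fun _ _ hz => hz.2) (iUnion_subset fun n => hTE n)
  obtain ⟨g₁, hg₁⟩ := hX.1.exists_homeomorph_stoneCech
    ((hUζ.comp Subtype.val_injective).diff hE.isClosed fun n => n.2.1)
    (hT.comp Subtype.val_injective) (hsep Uζ)
  obtain ⟨g₂, hg₂⟩ := hX.1.exists_homeomorph_stoneCech (hT.comp Subtype.val_injective)
    ((hUρ.comp Subtype.val_injective).diff hE.isClosed fun n => n.2.2) (hsep Uρ).symm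
  obtain ⟨y, hy⟩ := hX.2 (g₁.trans g₂) x
  refine ⟨y, tendsto_of_homeomorph_stoneCech (g₁.trans g₂) ?_ hx hy⟩
  filter_upwards [hA] with n hn
  simpa only [Homeomorph.trans_apply, comp_apply] using
    (congrArg g₂ (hg₁ ⟨n, hn⟩)).trans (hg₂ ⟨n, hn⟩)

end

/-- In a maximally homogeneous extremally disconnected space, all discrete
exact sequences realize the same set of free ultrafilters as limits. -/
theorem stmt_16 {X : Type*} [TopologicalSpace X] [T2Space X] [CompletelyRegularSpace X]
    [ExtremallyDisconnected X] (hX : MaximallyHomogeneous X)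
    (ζ ρ : ℕ → X) (hζinj : Function.Injective ζ) (hζd : DiscreteTopology ↥(Set.range ζ))
    (hρinj : Function.Injective ρ) (hρd : DiscreteTopology ↥(Set.range ρ)) :
    {p : Ultrafilter ℕ | FreeUF p ∧ ∃ l : X, PLim p ζ l} =
      {p : Ultrafilter ℕ | FreeUF p ∧ ∃ l : X, PLim p ρ l} := by
  ext p
  exact ⟨fun ⟨hp, _, hx⟩ => ⟨hp, hX.exists_plim hζinj hζd hρinj hρd hp hx⟩,
    fun ⟨hp, _, hy⟩ => ⟨hp, hX.exists_plim hρinj hρd hζinj hζd hp hy⟩⟩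
end
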